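/- arXiv:2205.08203 — 4 statements merged into one kernel-verified Lean document; each statement's English description precedes it below -/
import Mathlib

section
/- Let n ≥ 1, j ≥ 1, s ∈ {0,…,n} and set α = s/n. Then the probability that an activated agent holding opinion b adopts opinion a satisfies q_{2j+1}(s) = q_{2j}(s) + ((2α − 1)/2)·C(2j, j)·α^j·(1−α)^j, and the probability that an activated agent holding opinion a adopts opinion b satisfies 1 − q_{2j+1}(s) = (1 − q_{2j}(s)) − ((2α − 1)/2)·C(2j, j)·α^j·(1−α)^j. -/
open MeasureTheory Finset
open scoped ENNReal NNReal

noncomputable section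

/-- Probability mass function of a binomial random variable `Bin(m, p)` at `k`. -/
def binomPMF (m k : ℕ) (p : ℝ) : ℝ := (m.choose k : ℝ) * p ^ k * (1 - p) ^ (m - k)

/-- Tail probability `P(Bin(m, p) ≥ j)`. -/
def binomTail (m j : ℕ) (p : ℝ) : ℝ := ∑ k ∈ Finset.Icc j m, binomPMF m k p

/-- Cumulative distribution function `P(Bin(m, p) ≤ j)`. -/
def binomCDF (m j : ℕ) (p : ℝ) : ℝ := ∑ k ∈ Finset.range (j + 1), binomPMF m k p

/-- `majProb n j s` is the sample-majority probability `q_j(s)`: the probability that an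
agent sampling `j` agents uniformly at random with replacement (when `s` of the `n` agents
hold opinion `a`) adopts opinion `a` under majority with uniform tie-breaking.
For odd `j = 2m+1` this is `P(Bin(2m+1, s/n) ≥ m+1)`; for even `j = 2m` it is
`P(Bin(2m, s/n) ≥ m+1) + (1/2)·P(Bin(2m, s/n) = m)`. -/
def majProb (n j s : ℕ) : ℝ :=
  binomTail j (j / 2 + 1) ((s : ℝ) / n) +
    if Even j then (1 / 2) * binomPMF j (j / 2) ((s : ℝ) / n) else 0

/-- One-step transition kernel of the sequential `j`-Majority process on states `{0, …, n}`:
from state `s`, move to `s+1` with probability `((n-s)/n)·q_j(s)`, to `s-1` with probability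
`(s/n)·(1-q_j(s))`, and stay at `s` otherwise. -/
def seqKernel (n j : ℕ) (s u : ℕ) : ℝ :=
  if u = s + 1 then (((n : ℝ) - s) / n) * majProb n j s
  else if u + 1 = s then ((s : ℝ) / n) * (1 - majProb n j s)
  else if u = s then
    1 - (((n : ℝ) - s) / n) * majProb n j s - ((s : ℝ) / n) * (1 - majProb n j s)
  else 0

/-- One-step transition kernel of the gossip `j`-Majority process on states `{0, …, n}`:
from state `s`, the next state is distributed as `Bin(n, q_j(s))`. -/
def gossipKernel (n j : ℕ) (s u : ℕ) : ℝ := binomPMF n u (majProb n j s)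

/-- `kernelTail K n s d` is the mass that the kernel `K` places, from state `s`,
on the set `{d, d+1, …, n}`, i.e. `P(X_{t+1} ≥ d | X_t = s)`. -/
def kernelTail (K : ℕ → ℕ → ℝ) (n s d : ℕ) : ℝ := ∑ u ∈ Finset.Icc d n, K s u

/-- `IsMarkovChain μ K x X` states that, under the probability measure `μ`, the process
`X` is a Markov chain with one-step transition kernel `K` started at `x`: `X 0 = x`
almost surely, and conditionally on any finite path the next state is distributed
according to `K` applied to the current state. -/
def IsMarkovChain {Ω : Type*} [MeasurableSpace Ω] (μ : Measure Ω)
    (K : ℕ → ℕ → ℝ) (x : ℕ) (X : ℕ → Ω → ℕ) : Prop :=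
  IsProbabilityMeasure μ ∧
  (∀ t, Measurable (X t)) ∧
  μ {ω | X 0 ω = x} = 1 ∧
  ∀ (t : ℕ) (p : ℕ → ℕ) (u : ℕ),
    μ ({ω | X (t + 1) ω = u} ∩ {ω | ∀ i ≤ t, X i ω = p i}) =
      ENNReal.ofReal (K (p t) u) * μ {ω | ∀ i ≤ t, X i ω = p i}

/-- The convergence (hitting) time: the first time `t` with `X t ∈ {0, n}`
(`⊤` if the process never reaches a consensus state). -/
def hitTime {Ω : Type*} (n : ℕ) (X : ℕ → Ω → ℕ) (ω : Ω) : ℕ∞ :=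
  ⨅ (t : ℕ) (_ : X t ω = 0 ∨ X t ω = n), (t : ℕ∞)

lemma binomPMF_eq_zero_of_lt {m k : ℕ} (h : m < k) (p : ℝ) : binomPMF m k p = 0 := by
  simp [binomPMF, Nat.choose_eq_zero_of_lt h]

/-- Pascal's rule for the binomial distribution: condition on the last of the `m + 1` trials. -/
lemma binomPMF_succ_succ (m k : ℕ) (p : ℝ) :
    binomPMF (m + 1) (k + 1) p = p * binomPMF m k p + (1 - p) * binomPMF m (k + 1) p := by
  rcases lt_trichotomy k m with hlt | rfl | hgt
  · obtain ⟨d, rfl⟩ := Nat.exists_eq_add_of_lt hlt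
    simp only [binomPMF, Nat.choose_succ_succ, Nat.cast_add]
    rw [show k + d + 1 + 1 - (k + 1) = d + 1 by omega, show k + d + 1 - k = d + 1 by omega,
      show k + d + 1 - (k + 1) = d by omega]
    ring
  · simp [binomPMF]
    ring
  · simp [binomPMF_eq_zero_of_lt, hgt, Nat.lt_succ_of_lt hgt]

lemma binomTail_eq_binomPMF_add {m r : ℕ} (h : r ≤ m) (p : ℝ) :
    binomTail m r p = binomPMF m r p + binomTail m (r + 1) p := by
  rw [binomTail, Finset.Icc_eq_cons_Ioc h, Finset.sum_cons, ← Finset.Icc_add_one_left_eq_Ioc]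
  rfl

lemma sum_Icc_binomPMF_succ (m r : ℕ) (p : ℝ) :
    ∑ k ∈ Finset.Icc r m, binomPMF m (k + 1) p = binomTail m (r + 1) p := by
  calc ∑ k ∈ Finset.Icc r m, binomPMF m (k + 1) p
      = ∑ k ∈ Finset.Icc (r + 1) (m + 1), binomPMF m k p := by
        rw [← Finset.map_add_right_Icc, Finset.sum_map]
        rfl
    _ = binomTail m (r + 1) p := by
        refine (Finset.sum_subset (Finset.Icc_subset_Icc_right m.le_succ) fun k hk hk' => ?_).symm
        exact binomPMF_eq_zero_of_lt (by simp_all) p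

lemma binomTail_succ_succ {m r : ℕ} (h : r ≤ m) (p : ℝ) :
    binomTail (m + 1) (r + 1) p = binomTail m (r + 1) p + p * binomPMF m r p := by
  have hshift : binomTail (m + 1) (r + 1) p = ∑ k ∈ Finset.Icc r m, binomPMF (m + 1) (k + 1) p := by
    rw [binomTail, ← Finset.map_add_right_Icc, Finset.sum_map]
    rfl
  calc binomTail (m + 1) (r + 1) p
      = p * binomTail m r p + (1 - p) * binomTail m (r + 1) p := by
        simp only [hshift, binomPMF_succ_succ, Finset.sum_add_distrib, ← Finset.mul_sum,
          sum_Icc_binomPMF_succ]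
        rfl
    _ = binomTail m (r + 1) p + p * binomPMF m r p := by
        rw [binomTail_eq_binomPMF_add h]
        ring

lemma majProb_two_mul_add_one (n j s : ℕ) :
    majProb n (2 * j + 1) s = binomTail (2 * j + 1) (j + 1) ((s : ℝ) / n) := by
  rw [majProb, if_neg (Nat.not_even_two_mul_add_one j), add_zero,
    show (2 * j + 1) / 2 = j by omega]

lemma majProb_two_mul (n j s : ℕ) :
    majProb n (2 * j) s =
      binomTail (2 * j) (j + 1) ((s : ℝ) / n) + 1 / 2 * binomPMF (2 * j) j ((s : ℝ) / n) := by
  rw [majProb, if_pos (even_two_mul j), show 2 * j / 2 = j by omega]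

/-- Adding one sample to an even sample only matters on a tie, which it breaks towards `a`
with probability `α` instead of `1/2`. -/
lemma majProb_two_mul_add_one_eq (n j s : ℕ) :
    majProb n (2 * j + 1) s =
      majProb n (2 * j) s + ((s : ℝ) / n - 1 / 2) * binomPMF (2 * j) j ((s : ℝ) / n) := by
  rw [majProb_two_mul_add_one, majProb_two_mul, binomTail_succ_succ (by omega)]
  ring

theorem stmt8_general (n j s : ℕ) :
    majProb n (2 * j + 1) s =
      majProb n (2 * j) s +
        ((2 * ((s : ℝ) / n) - 1) / 2) * ((2 * j).choose j : ℝ) *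
          ((s : ℝ) / n) ^ j * (1 - (s : ℝ) / n) ^ j ∧
    1 - majProb n (2 * j + 1) s =
      (1 - majProb n (2 * j) s) -
        ((2 * ((s : ℝ) / n) - 1) / 2) * ((2 * j).choose j : ℝ) *
          ((s : ℝ) / n) ^ j * (1 - (s : ℝ) / n) ^ j := by
  have h := majProb_two_mul_add_one_eq n j s
  rw [binomPMF, show 2 * j - j = j by omega] at h
  constructor <;> linarith

theorem stmt8 (n j s : ℕ) (hn : 1 ≤ n) (hj : 1 ≤ j) (hs : s ≤ n) :
    majProb n (2 * j + 1) s =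
      majProb n (2 * j) s +
        ((2 * ((s : ℝ) / n) - 1) / 2) * ((2 * j).choose j : ℝ) *
          ((s : ℝ) / n) ^ j * (1 - (s : ℝ) / n) ^ j ∧
    1 - majProb n (2 * j + 1) s =
      (1 - majProb n (2 * j) s) -
        ((2 * ((s : ℝ) / n) - 1) / 2) * ((2 * j).choose j : ℝ) *
          ((s : ℝ) / n) ^ j * (1 - (s : ℝ) / n) ^ j :=
  stmt8_general n j s
end
end

section
/- There exist constants ε > 0, C > 0 and c > 0 such that for all sufficiently large n the following holds for the sequential 3-Majority process. If X_0 ≥ n/2 + √(n·log n), then with probability at least 1 − n^{−c} there is a time t ≤ C·n·log n with X_t > (1+ε)·n/2, and moreover X_{t'} > n/2 for all t' ≤ t (the initial majority opinion is preserved). -/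
open MeasureTheory Finset
open scoped ENNReal NNReal

noncomputable section

namespace Stmt14

lemma Icc23 : Finset.Icc 2 3 = ({2, 3} : Finset ℕ) := by decide

lemma majProb_three (n s : ℕ) :
    majProb n 3 s = 3*((s:ℝ)/n)^2 - 2*((s:ℝ)/n)^3 := by
  set p : ℝ := (s:ℝ)/n
  unfold majProb binomTail
  rw [if_neg (by decide : ¬ Even 3)]
  rw [show (3:ℕ)/2 + 1 = 2 by norm_num, Icc23]
  rw [Finset.sum_insert (by decide), Finset.sum_singleton]
  unfold binomPMF
  norm_num [Nat.choose]
  ring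

def Kp (n s : ℕ) : ℝ := (((n:ℝ) - s) / n) * majProb n 3 s
def Km (n s : ℕ) : ℝ := ((s:ℝ) / n) * (1 - majProb n 3 s)
def K0 (n s : ℕ) : ℝ := 1 - Kp n s - Km n s

lemma seqKernel_succ (n s : ℕ) : seqKernel n 3 s (s+1) = Kp n s := by
  simp [seqKernel, Kp]

lemma seqKernel_pred (n s : ℕ) (hs : 1 ≤ s) : seqKernel n 3 s (s-1) = Km n s := by
  have h1 : s - 1 ≠ s + 1 := by omega
  have h2 : s - 1 + 1 = s := by omega
  simp [seqKernel, h1, h2, Km]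

lemma seqKernel_self (n s : ℕ) : seqKernel n 3 s s = K0 n s := by
  have h1 : s ≠ s + 1 := by omega
  have h2 : s + 1 ≠ s := by omega
  simp [seqKernel, h1, h2, Kp, Km, K0]

lemma seqKernel_zero (n s u : ℕ) (h1 : u ≠ s+1) (h2 : u+1 ≠ s) (h3 : u ≠ s) :
    seqKernel n 3 s u = 0 := by
  simp [seqKernel, h1, h2, h3]

section bounds
variable {n s : ℕ} (hn : 0 < n) (hs : s ≤ n)
include hn hs

lemma p_mem : 0 ≤ (s:ℝ)/n ∧ (s:ℝ)/n ≤ 1 := by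
  constructor
  · positivity
  · rw [div_le_one (by positivity)]; exact_mod_cast hs

lemma q_mem : 0 ≤ majProb n 3 s ∧ majProb n 3 s ≤ 1 := by
  obtain ⟨h0, h1⟩ := p_mem hn hs
  rw [majProb_three]
  set p : ℝ := (s:ℝ)/n
  constructor <;> nlinarith [sq_nonneg p, sq_nonneg (1-p), mul_nonneg h0 h0]

lemma Kp_nonneg : 0 ≤ Kp n s := by
  obtain ⟨h0, h1⟩ := p_mem hn hs
  obtain ⟨g0, g1⟩ := q_mem hn hs
  have : ((n:ℝ) - s)/n = 1 - (s:ℝ)/n := by field_simp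
  unfold Kp; rw [this]; nlinarith

lemma Km_nonneg : 0 ≤ Km n s := by
  obtain ⟨h0, h1⟩ := p_mem hn hs
  obtain ⟨g0, g1⟩ := q_mem hn hs
  unfold Km; nlinarith

lemma Kp_le_one : Kp n s ≤ 1 := by
  obtain ⟨h0, h1⟩ := p_mem hn hs
  obtain ⟨g0, g1⟩ := q_mem hn hs
  have : ((n:ℝ) - s)/n = 1 - (s:ℝ)/n := by field_simp
  unfold Kp; rw [this]; nlinarith

lemma K0_nonneg : 0 ≤ K0 n s := by
  obtain ⟨h0, h1⟩ := p_mem hn hs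
  obtain ⟨g0, g1⟩ := q_mem hn hs
  have : ((n:ℝ) - s)/n = 1 - (s:ℝ)/n := by field_simp
  unfold K0 Kp Km; rw [this]; nlinarith

lemma Kp_sub_Km : Kp n s - Km n s = majProb n 3 s - (s:ℝ)/n := by
  have : ((n:ℝ) - s)/n = 1 - (s:ℝ)/n := by field_simp
  unfold Kp Km; rw [this]; ring

end bounds

lemma drift (n s : ℕ) (hn : 0 < n) (h1 : (n:ℝ)/2 < s) (h2 : (s:ℝ) ≤ (4/5)*n) :
    ((s:ℝ)/n - 1/2)/4 ≤ majProb n 3 s - (s:ℝ)/n := by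
  have hn' : (0:ℝ) < n := by exact_mod_cast hn
  set p : ℝ := (s:ℝ)/n with hp
  have hp1 : 1/2 < p := by rw [hp, lt_div_iff₀ hn']; linarith
  have hp2 : p ≤ 4/5 := by rw [hp, div_le_iff₀ hn']; linarith
  rw [majProb_three]
  nlinarith [mul_nonneg (sub_nonneg.mpr hp1.le) (sub_nonneg.mpr hp2)]

end Stmt14


namespace Stmt14

/-- ENNReal kernel. -/
def kern (n : ℕ) (s u : ℕ) : ℝ≥0∞ := ENNReal.ofReal (seqKernel n 3 s u)

lemma kern_sum_le (n : ℕ) (hn : 0 < n) (s : ℕ) (h1 : 1 ≤ s) (hs : s ≤ n) :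
    kern n s (s+1) + kern n s (s-1) + kern n s s ≤ 1 := by
  rw [kern, kern, kern, seqKernel_succ, seqKernel_pred n s h1, seqKernel_self]
  rw [← ENNReal.ofReal_add (Kp_nonneg hn hs) (Km_nonneg hn hs),
      ← ENNReal.ofReal_add (add_nonneg (Kp_nonneg hn hs) (Km_nonneg hn hs)) (K0_nonneg hn hs)]
  unfold K0
  norm_num

/-- The failure value function: from state `s`, with `T` steps remaining,
the probability of failing to reach `{> b}` while staying `> a`. -/
def RR (n a b : ℕ) : ℕ → ℕ → ℝ≥0∞
  | 0, s => if s ≤ a then 1 else if b < s then 0 else 1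
  | T+1, s => if s ≤ a then 1 else if b < s then 0 else
      kern n s (s+1) * RR n a b T (s+1) + kern n s (s-1) * RR n a b T (s-1)
        + kern n s s * RR n a b T s

lemma RR_of_le {n a b T s : ℕ} (h : s ≤ a) : RR n a b T s = 1 := by
  cases T <;> simp [RR, h]

lemma RR_of_gt {n a b T s : ℕ} (ha : ¬ s ≤ a) (h : b < s) : RR n a b T s = 0 := by
  cases T <;> simp [RR, ha, h]

lemma RR_band {n a b T s : ℕ} (ha : ¬ s ≤ a) (h : ¬ b < s) :
    RR n a b (T+1) s = kern n s (s+1) * RR n a b T (s+1) + kern n s (s-1) * RR n a b T (s-1)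
        + kern n s s * RR n a b T s := by
  simp [RR, ha, h]

lemma RR_zero_band {n a b s : ℕ} (h : ¬ b < s) : RR n a b 0 s = 1 := by
  simp [RR, h]

variable {n : ℕ}

lemma RR_le_one (hn : 0 < n) {a b : ℕ} (ha : 1 ≤ a) (hb : b ≤ n) :
    ∀ T s, RR n a b T s ≤ 1 := by
  intro T
  induction T with
  | zero =>
    intro s
    rcases le_or_gt s a with h | h
    · rw [RR_of_le h]
    · rcases lt_or_ge b s with h2 | h2
      · rw [RR_of_gt (by omega) h2]; exact zero_le_one
      · rw [RR_zero_band (by omega)]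
  | succ T ih =>
    intro s
    rcases le_or_gt s a with h | h
    · rw [RR_of_le h]
    · rcases lt_or_ge b s with h2 | h2
      · rw [RR_of_gt (by omega) h2]; exact zero_le_one
      · rw [RR_band (by omega) (by omega)]
        calc kern n s (s+1) * RR n a b T (s+1) + kern n s (s-1) * RR n a b T (s-1)
              + kern n s s * RR n a b T s
            ≤ kern n s (s+1) * 1 + kern n s (s-1) * 1 + kern n s s * 1 := by
              gcongr <;> exact ih _
          _ ≤ 1 := by
              rw [mul_one, mul_one, mul_one]
              exact kern_sum_le n hn s (by omega) (le_trans h2 hb)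

lemma RR_anti (hn : 0 < n) {a b : ℕ} (ha : 1 ≤ a) (hb : b ≤ n) :
    ∀ T s, RR n a b (T+1) s ≤ RR n a b T s := by
  intro T
  induction T with
  | zero =>
    intro s
    rcases le_or_gt s a with h | h
    · rw [RR_of_le h, RR_of_le h]
    · rcases lt_or_ge b s with h2 | h2
      · simp only [RR_of_gt (show ¬ s ≤ a by omega) h2, le_refl]
      · rw [RR_zero_band (by omega)]
        exact RR_le_one hn ha hb 1 s
  | succ T ih =>
    intro s
    rcases le_or_gt s a with h | h
    · rw [RR_of_le h, RR_of_le h]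
    · rcases lt_or_ge b s with h2 | h2
      · simp only [RR_of_gt (show ¬ s ≤ a by omega) h2, le_refl]
      · conv_rhs => rw [RR_band (T := T) (s := s) (by omega) (by omega)]
        rw [RR_band (T := T+1) (s := s) (by omega) (by omega)]
        gcongr <;> exact ih _

lemma RR_anti_le (hn : 0 < n) {a b : ℕ} (ha : 1 ≤ a) (hb : b ≤ n) {T T' : ℕ} (h : T ≤ T') :
    ∀ s, RR n a b T' s ≤ RR n a b T s := by
  induction T' with
  | zero => intro s; rw [Nat.le_zero.mp h]
  | succ T' ih =>
    intro s
    rcases Nat.eq_or_lt_of_le h with rfl | h2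
    · exact le_refl _
    · exact le_trans (RR_anti hn ha hb T' s) (ih (by omega) s)

lemma RR_mono_a (hn : 0 < n) {a a' b : ℕ} (ha : 1 ≤ a) (hb : b ≤ n) (haa : a ≤ a') :
    ∀ T s, RR n a b T s ≤ RR n a' b T s := by
  intro T
  induction T with
  | zero =>
    intro s
    rcases le_or_gt s a' with h | h
    · rw [RR_of_le h]; exact RR_le_one hn ha hb 0 s
    · rcases lt_or_ge b s with h2 | h2
      · rw [RR_of_gt (a := a) (by omega) h2]; exact zero_le
      · rw [RR_zero_band (n := n) (a := a) (by omega), RR_zero_band (n := n) (a := a') (by omega)]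
  | succ T ih =>
    intro s
    rcases le_or_gt s a' with h | h
    · rw [RR_of_le (a := a') h]; exact RR_le_one hn ha hb _ s
    · rcases lt_or_ge b s with h2 | h2
      · rw [RR_of_gt (a := a) (by omega) h2]; exact zero_le
      · rw [RR_band (a := a) (by omega) (by omega), RR_band (a := a') (by omega) (by omega)]
        gcongr <;> exact ih _

lemma RR_mono_b (hn : 0 < n) {a b b' : ℕ} (ha : 1 ≤ a) (hb' : b' ≤ n) (hbb : b ≤ b') :
    ∀ T s, RR n a b T s ≤ RR n a b' T s := by
  intro T
  induction T with
  | zero =>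
    intro s
    rcases le_or_gt s a with h | h
    · rw [RR_of_le h, RR_of_le h]
    · rcases lt_or_ge b s with h2 | h2
      · rw [RR_of_gt (b := b) (by omega) h2]; exact zero_le
      · rw [RR_zero_band (b := b) (by omega), RR_zero_band (b := b') (by omega)]
  | succ T ih =>
    intro s
    rcases le_or_gt s a with h | h
    · rw [RR_of_le h, RR_of_le h]
    · rcases lt_or_ge b s with h2 | h2
      · rw [RR_of_gt (b := b) (by omega) h2]; exact zero_le
      · rw [RR_band (b := b) (by omega) (by omega), RR_band (b := b') (by omega) (by omega)]
        gcongr <;> exact ih _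

/-- Sequential composition of two phases. -/
lemma RR_comp (hn : 0 < n) {a c a₁ b : ℕ} (hc : c ≤ n) (ha : 1 ≤ a) (haa : a ≤ a₁)
    (T₂ : ℕ) (M : ℝ≥0∞) (hM : ∀ s, b < s → RR n a c T₂ s ≤ M) :
    ∀ T₁ s, RR n a c (T₁ + T₂) s ≤ RR n a₁ b T₁ s + M := by
  intro T₁
  induction T₁ with
  | zero =>
    intro s
    rcases le_or_gt s a₁ with h | h
    · calc RR n a c (0 + T₂) s ≤ 1 := RR_le_one hn ha hc _ s
        _ ≤ RR n a₁ b 0 s + M := by rw [RR_of_le h]; exact le_self_add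
    · rcases lt_or_ge b s with h2 | h2
      · rw [zero_add]
        exact le_add_left (hM s h2)
      · rw [RR_zero_band (by omega)]
        calc RR n a c (0 + T₂) s ≤ 1 := RR_le_one hn ha hc _ s
          _ ≤ 1 + M := le_self_add
  | succ T₁ ih =>
    intro s
    rcases le_or_gt s a₁ with h | h
    · calc RR n a c (T₁ + 1 + T₂) s ≤ 1 := RR_le_one hn ha hc _ s
        _ ≤ RR n a₁ b (T₁+1) s + M := by rw [RR_of_le h]; exact le_self_add
    · rcases lt_or_ge b s with h2 | h2
      · calc RR n a c (T₁ + 1 + T₂) s ≤ RR n a c T₂ s :=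
              RR_anti_le hn ha hc (by omega) s
          _ ≤ M := hM s h2
          _ ≤ RR n a₁ b (T₁+1) s + M := le_add_left (le_refl M)
      · rcases lt_or_ge c s with h3 | h3
        · rw [RR_of_gt (a := a) (by omega) h3]; exact zero_le
        · have e1 : T₁ + 1 + T₂ = (T₁ + T₂) + 1 := by omega
          rw [e1, RR_band (by omega) (by omega), RR_band (by omega) (by omega)]
          calc kern n s (s+1) * RR n a c (T₁+T₂) (s+1)
                + kern n s (s-1) * RR n a c (T₁+T₂) (s-1)
                + kern n s s * RR n a c (T₁+T₂) s
              ≤ kern n s (s+1) * (RR n a₁ b T₁ (s+1) + M)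
                + kern n s (s-1) * (RR n a₁ b T₁ (s-1) + M)
                + kern n s s * (RR n a₁ b T₁ s + M) := by gcongr <;> exact ih _
            _ = (kern n s (s+1) * RR n a₁ b T₁ (s+1) + kern n s (s-1) * RR n a₁ b T₁ (s-1)
                + kern n s s * RR n a₁ b T₁ s)
                + (kern n s (s+1) + kern n s (s-1) + kern n s s) * M := by ring
            _ ≤ (kern n s (s+1) * RR n a₁ b T₁ (s+1) + kern n s (s-1) * RR n a₁ b T₁ (s-1)
                + kern n s s * RR n a₁ b T₁ s) + 1 * M := by
                gcongr
                exact kern_sum_le n hn s (by omega) (le_trans h3 hc)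
            _ = _ := by rw [one_mul]

end Stmt14

set_option maxHeartbeats 1000000

namespace Stmt14

lemma exp_upper {x : ℝ} (h : |x| ≤ 1) : Real.exp x ≤ 1 + x + (3/4) * x^2 := by
  have := Real.exp_bound h (n := 2) (by norm_num)
  have e1 : ∑ m ∈ Finset.range 2, x ^ m / (m.factorial : ℝ) = 1 + x := by
    simp [Finset.sum_range_succ]
  rw [e1] at this
  have e2 : |x| ^ 2 * ((2:ℕ).succ / ((2:ℕ).factorial * (2:ℕ) : ℝ)) = (3/4) * x^2 := by
    rw [sq_abs]
    norm_num [Nat.factorial]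
    ring
  rw [e2] at this
  have := abs_le.mp this
  linarith [this.2]

/-- Main potential estimate for a single phase. -/
lemma potent {n : ℕ} (hn : 0 < n) {a b : ℕ} (ha : 1 ≤ a) (hb : b ≤ n) (Δ : ℝ)
    (hΔ0 : 0 < Δ) (hΔ1 : Δ ≤ 1)
    (hdrift : ∀ u : ℕ, a < u → u ≤ b → Δ ≤ majProb n 3 u - (u:ℝ)/n) :
    ∀ T s, RR n a b T s ≤
      ENNReal.ofReal ((1-Δ)^(s - a) + Real.exp ((Δ/4) * ((b:ℝ) - s)) * (1 - Δ^2/8)^T) := by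
  have hl0 : (0:ℝ) ≤ 1 - Δ := by linarith
  have hl1 : (1:ℝ) - Δ ≤ 1 := by linarith
  have hr0 : (0:ℝ) ≤ 1 - Δ^2/8 := by nlinarith
  have hr1 : (1:ℝ) - Δ^2/8 ≤ 1 := by nlinarith
  intro T
  induction T with
  | zero =>
    intro s
    rcases le_or_gt s a with h | h
    · rw [RR_of_le h]
      have : s - a = 0 := by omega
      rw [this, pow_zero, pow_zero, mul_one]
      rw [← ENNReal.ofReal_one]
      apply ENNReal.ofReal_le_ofReal
      have : 0 ≤ Real.exp ((Δ/4) * ((b:ℝ) - s)) := Real.exp_nonneg _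
      linarith
    · rcases lt_or_ge b s with h2 | h2
      · rw [RR_of_gt (by omega) h2]; exact zero_le
      · rw [RR_zero_band (by omega), pow_zero, mul_one]
        rw [← ENNReal.ofReal_one]
        apply ENNReal.ofReal_le_ofReal
        have h3 : (1:ℝ) ≤ Real.exp ((Δ/4) * ((b:ℝ) - s)) := by
          apply Real.one_le_exp
          have : (s:ℝ) ≤ (b:ℝ) := by exact_mod_cast h2
          nlinarith
        have h4 : (0:ℝ) ≤ (1-Δ)^(s-a) := pow_nonneg hl0 _
        linarith
  | succ T ih =>
    intro s
    rcases le_or_gt s a with h | h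
    · rw [RR_of_le h]
      have : s - a = 0 := by omega
      rw [this, pow_zero]
      rw [← ENNReal.ofReal_one]
      apply ENNReal.ofReal_le_ofReal
      have h3 : (0:ℝ) ≤ Real.exp ((Δ/4) * ((b:ℝ) - s)) * (1 - Δ^2/8)^(T+1) :=
        mul_nonneg (Real.exp_nonneg _) (pow_nonneg hr0 _)
      linarith
    · rcases lt_or_ge b s with h2 | h2
      · rw [RR_of_gt (by omega) h2]; exact zero_le
      · -- band case
        have hs1 : 1 ≤ s := by omega
        have hsn : s ≤ n := by omega
        set q : ℝ := majProb n 3 s with hq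
        have hKp0 : 0 ≤ Kp n s := Kp_nonneg hn hsn
        have hKm0 : 0 ≤ Km n s := Km_nonneg hn hsn
        have hK00 : 0 ≤ K0 n s := K0_nonneg hn hsn
        have hKp1 : Kp n s ≤ 1 := Kp_le_one hn hsn
        have hKm1 : Km n s ≤ 1 := by
          obtain ⟨h0, h1⟩ := p_mem hn hsn
          obtain ⟨g0, g1⟩ := q_mem hn hsn
          unfold Km; nlinarith
        have hd : Δ ≤ Kp n s - Km n s := by
          rw [Kp_sub_Km hn hsn]
          exact hdrift s h h2
        -- abbreviations for potential values
        set h4 : ℝ := Δ/4 with hh4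
        have hh0 : 0 < h4 := by rw [hh4]; linarith
        have hh1 : h4 ≤ 1 := by rw [hh4]; linarith
        set v : ℝ := Real.exp (h4 * ((b:ℝ) - s)) with hv
        have hv0 : 0 ≤ v := Real.exp_nonneg _
        set e : ℕ := s - 1 - a with he
        have hse : s - a = e + 1 := by omega
        have hsucce : s + 1 - a = e + 2 := by omega
        have hprede : s - 1 - a = e := by omega
        set t : ℝ := (1-Δ)^e with ht
        have ht0 : 0 ≤ t := pow_nonneg hl0 _
        -- real bounds on the three neighbor potentials
        have wsucc : (1-Δ)^(s+1-a) = t * (1-Δ)^2 := by rw [hsucce, ht]; ring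
        have wpred : (1-Δ)^(s-1-a) = t := by rw [hprede]
        have wself : (1-Δ)^(s-a) = t * (1-Δ) := by rw [hse, ht]; ring
        have vsucc : Real.exp (h4 * ((b:ℝ) - (s+1:ℕ))) = v * Real.exp (-h4) := by
          rw [hv, ← Real.exp_add]
          congr 1
          push_cast
          ring
        have vpred : Real.exp (h4 * ((b:ℝ) - (s-1:ℕ))) = v * Real.exp h4 := by
          rw [hv, ← Real.exp_add]
          congr 1
          have : ((s - 1 : ℕ):ℝ) = (s:ℝ) - 1 := by
            have : (1:ℕ) ≤ s := hs1
            push_cast [this]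
            ring
          rw [this]
          ring
        -- the inductive bound, in real form
        have habs : |(-h4)| ≤ 1 := by rw [abs_le]; constructor <;> linarith
        have habs' : |h4| ≤ 1 := by rw [abs_le]; constructor <;> linarith
        have hEm : Real.exp (-h4) ≤ 1 - h4 + (3/4) * h4^2 := by
          have h' := exp_upper habs
          have h'' : (-h4)^2 = h4^2 := by ring
          rw [h''] at h'
          linarith
        have hEp : Real.exp h4 ≤ 1 + h4 + (3/4) * h4^2 := exp_upper habs'
        -- claim 1 : ruin part
        have claim1 : Kp n s * (t * (1-Δ)^2) + Km n s * t + K0 n s * (t * (1-Δ))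
            ≤ t * (1-Δ) := by
          have hgl : 0 ≤ Kp n s * (1-Δ) - Km n s := by nlinarith
          have key : t * (1-Δ) - (Kp n s * (t * (1-Δ)^2) + Km n s * t + K0 n s * (t * (1-Δ)))
              = t * Δ * (Kp n s * (1-Δ) - Km n s) := by
            unfold K0; ring
          nlinarith [mul_nonneg (mul_nonneg ht0 hΔ0.le) hgl]
        -- claim 2 : speed part
        have claim2 : Kp n s * (v * Real.exp (-h4)) + Km n s * (v * Real.exp h4) + K0 n s * v
            ≤ (1 - Δ^2/8) * v := by
          have c2 : Kp n s * Real.exp (-h4) + Km n s * Real.exp h4 + K0 n s ≤ 1 - Δ^2/8 := by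
            have b1 : Kp n s * Real.exp (-h4) ≤ Kp n s * (1 - h4 + (3/4) * h4^2) :=
              mul_le_mul_of_nonneg_left hEm hKp0
            have b2 : Km n s * Real.exp h4 ≤ Km n s * (1 + h4 + (3/4) * h4^2) :=
              mul_le_mul_of_nonneg_left hEp hKm0
            have b3 : h4 * Δ ≤ h4 * (Kp n s - Km n s) := mul_le_mul_of_nonneg_left hd hh0.le
            have b4 : (3/4) * h4^2 * (Kp n s + Km n s) ≤ (3/4) * h4^2 * 2 := by
              apply mul_le_mul_of_nonneg_left (by linarith) (by positivity)
            unfold K0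
            rw [hh4] at *
            nlinarith [b1, b2, b3, b4]
          calc Kp n s * (v * Real.exp (-h4)) + Km n s * (v * Real.exp h4) + K0 n s * v
              = (Kp n s * Real.exp (-h4) + Km n s * Real.exp h4 + K0 n s) * v := by ring
            _ ≤ (1 - Δ^2/8) * v := mul_le_mul_of_nonneg_right c2 hv0
        -- assemble
        rw [RR_band (by omega) (by omega)]
        have hker1 : kern n s (s+1) = ENNReal.ofReal (Kp n s) := by rw [kern, seqKernel_succ]
        have hker2 : kern n s (s-1) = ENNReal.ofReal (Km n s) := by
          rw [kern, seqKernel_pred n s hs1]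
        have hker3 : kern n s s = ENNReal.ofReal (K0 n s) := by rw [kern, seqKernel_self]
        set r : ℝ := 1 - Δ^2/8 with hrr
        have grow : ∀ u : ℕ, 0 ≤ (1-Δ)^(u - a) + Real.exp (h4 * ((b:ℝ) - u)) * r^T := by
          intro u
          have := pow_nonneg hl0 (u - a)
          have := mul_nonneg (Real.exp_nonneg (h4 * ((b:ℝ) - u))) (pow_nonneg hr0 T)
          linarith
        calc kern n s (s+1) * RR n a b T (s+1) + kern n s (s-1) * RR n a b T (s-1)
              + kern n s s * RR n a b T s
            ≤ ENNReal.ofReal (Kp n s) *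
                ENNReal.ofReal ((1-Δ)^(s+1-a) + Real.exp (h4 * ((b:ℝ) - (s+1:ℕ))) * r^T)
              + ENNReal.ofReal (Km n s) *
                ENNReal.ofReal ((1-Δ)^(s-1-a) + Real.exp (h4 * ((b:ℝ) - (s-1:ℕ))) * r^T)
              + ENNReal.ofReal (K0 n s) *
                ENNReal.ofReal ((1-Δ)^(s-a) + Real.exp (h4 * ((b:ℝ) - s)) * r^T) := by
              rw [hker1, hker2, hker3]
              gcongr
              · exact ih (s+1)
              · exact ih (s-1)
              · exact ih s
          _ = ENNReal.ofReal (
                Kp n s * ((1-Δ)^(s+1-a) + Real.exp (h4 * ((b:ℝ) - (s+1:ℕ))) * r^T)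
              + Km n s * ((1-Δ)^(s-1-a) + Real.exp (h4 * ((b:ℝ) - (s-1:ℕ))) * r^T)
              + K0 n s * ((1-Δ)^(s-a) + Real.exp (h4 * ((b:ℝ) - s)) * r^T)) := by
              rw [← ENNReal.ofReal_mul hKp0, ← ENNReal.ofReal_mul hKm0, ← ENNReal.ofReal_mul hK00]
              rw [← ENNReal.ofReal_add (mul_nonneg hKp0 (grow _)) (mul_nonneg hKm0 (grow _)),
                  ← ENNReal.ofReal_add (add_nonneg (mul_nonneg hKp0 (grow _))
                    (mul_nonneg hKm0 (grow _))) (mul_nonneg hK00 (grow _))]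
          _ ≤ ENNReal.ofReal ((1-Δ)^(s-a) + Real.exp (h4 * ((b:ℝ) - s)) * r^(T+1)) := by
              apply ENNReal.ofReal_le_ofReal
              rw [wsucc, wpred, wself, vsucc, vpred]
              have hrT : (0:ℝ) ≤ r^T := pow_nonneg hr0 _
              have claim2' : Kp n s * (v * Real.exp (-h4) * r^T)
                  + Km n s * (v * Real.exp h4 * r^T) + K0 n s * (v * r^T)
                  ≤ r * v * r^T := by
                have := mul_le_mul_of_nonneg_right claim2 hrT
                nlinarith [this]
              have expand : r^(T+1) = r * r^T := by ring
              rw [expand]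
              nlinarith [claim1, claim2']

end Stmt14

namespace Stmt14

open scoped Classical

def GoodF (aG B : ℕ) {T : ℕ} (v : Fin (T+1) → ℕ) : Prop :=
  ∃ t, B < v t ∧ ∀ t' ≤ t, aG < v t'

def pathW (n : ℕ) {T : ℕ} (v : Fin (T+1) → ℕ) : ℝ≥0∞ :=
  ∏ i : Fin T, kern n (v i.castSucc) (v i.succ)

def SSs (n aG B : ℕ) (T s : ℕ) : ℝ≥0∞ :=
  ∑' v : Fin (T+1) → ℕ, if v 0 = s ∧ ¬ GoodF aG B v then pathW n v else 0

def Mass (n : ℕ) (T s : ℕ) : ℝ≥0∞ :=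
  ∑' v : Fin (T+1) → ℕ, if v 0 = s then pathW n v else 0

lemma pathW_zero (n : ℕ) (v : Fin 1 → ℕ) : pathW n v = 1 := by
  simp [pathW]

lemma pathW_cons (n : ℕ) {T : ℕ} (s : ℕ) (w : Fin (T+1) → ℕ) :
    pathW n (Fin.cons s w) = kern n s (w 0) * pathW n w := by
  unfold pathW
  rw [Fin.prod_univ_succ]
  rfl

lemma pathsum_head (n : ℕ) (T : ℕ) (g : (Fin (T+2) → ℕ) → ℝ≥0∞) :
    ∑' v : Fin (T+2) → ℕ, g v * pathW n v
      = ∑' (s : ℕ) (w : Fin (T+1) → ℕ),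
          g (Fin.cons s w) * (kern n s (w 0) * pathW n w) := by
  rw [← Equiv.tsum_eq (Fin.consEquiv (fun _ : Fin (T+2) => ℕ)) (fun v => g v * pathW n v)]
  rw [ENNReal.tsum_prod']
  apply tsum_congr; intro s
  apply tsum_congr; intro w
  have he : (Fin.consEquiv (fun _ : Fin (T+2) => ℕ)) (s, w) = Fin.cons s w := rfl
  rw [he, pathW_cons]

lemma Mass_zero (n s : ℕ) : Mass n 0 s = 1 := by
  unfold Mass
  rw [← Equiv.tsum_eq (Equiv.funUnique (Fin 1) ℕ).symm]
  have key : ∀ u : ℕ,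
      (if ((Equiv.funUnique (Fin 1) ℕ).symm u) 0 = s
        then pathW n ((Equiv.funUnique (Fin 1) ℕ).symm u) else 0)
      = if u = s then 1 else 0 := by
    intro u
    rw [pathW_zero]
    have h : ((Equiv.funUnique (Fin 1) ℕ).symm u) 0 = u := rfl
    by_cases hu : u = s <;> simp [h, hu]
  rw [tsum_congr key]
  simp

lemma Mass_succ (n : ℕ) (T s : ℕ) :
    Mass n (T+1) s = ∑' u : ℕ, kern n s u * Mass n T u := by
  calc Mass n (T+1) s
      = ∑' v : Fin (T+2) → ℕ,
          (if v 0 = s then (1:ℝ≥0∞) else 0) * pathW n v := by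
        unfold Mass
        apply tsum_congr; intro v
        by_cases h : v 0 = s <;> simp [h]
    _ = ∑' (a : ℕ) (w : Fin (T+1) → ℕ),
          (if (Fin.cons a w : Fin (T+2) → ℕ) 0 = s then (1:ℝ≥0∞) else 0)
            * (kern n a (w 0) * pathW n w) :=
        pathsum_head n T (fun v => if v 0 = s then 1 else 0)
    _ = ∑' (a : ℕ) (w : Fin (T+1) → ℕ),
          (if a = s then (1:ℝ≥0∞) else 0) * (kern n a (w 0) * pathW n w) := by
        simp only [Fin.cons_zero]
    _ = ∑' w : Fin (T+1) → ℕ, kern n s (w 0) * pathW n w := by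
        rw [tsum_eq_single s]
        · simp
        · intro a ha
          simp [ha]
    _ = ∑' (w : Fin (T+1) → ℕ) (u : ℕ),
          (if w 0 = u then kern n s u * pathW n w else 0) := by
        apply tsum_congr; intro w
        rw [tsum_eq_single (w 0)]
        · simp
        · intro u hu
          rw [if_neg (by exact fun h => hu h.symm)]
    _ = ∑' (u : ℕ) (w : Fin (T+1) → ℕ),
          (if w 0 = u then kern n s u * pathW n w else 0) := ENNReal.tsum_comm
    _ = ∑' u : ℕ, kern n s u * Mass n T u := by
        apply tsum_congr; intro u
        unfold Mass
        rw [← ENNReal.tsum_mul_left]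
        apply tsum_congr; intro w
        by_cases h : w 0 = u <;> simp [h]

lemma kern_vanish {n : ℕ} (hn : 0 < n) {s u : ℕ} (hs : s ≤ n) (hu : n < u) :
    kern n s u = 0 := by
  rcases eq_or_ne u (s+1) with rfl | h1
  · have hsn : s = n := by omega
    subst hsn
    rw [kern, seqKernel_succ]
    unfold Kp
    rw [sub_self, zero_div, zero_mul]
    simp
  · rw [kern, seqKernel_zero n s u h1 (by omega) (by omega)]
    simp

lemma kern_tsum_le_one {n : ℕ} (hn : 0 < n) {s : ℕ} (hs : s ≤ n) :
    ∑' u : ℕ, kern n s u ≤ 1 := by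
  rcases Nat.eq_zero_or_pos s with rfl | h1
  · have supp : ∀ u : ℕ, u ∉ ({1, 0} : Finset ℕ) → kern n 0 u = 0 := by
      intro u hu
      simp only [Finset.mem_insert, Finset.mem_singleton] at hu
      push_neg at hu
      rw [kern, seqKernel_zero n 0 u (by omega) (by omega) (by omega)]
      simp
    rw [tsum_eq_sum supp]
    have hq0 : majProb n 3 0 = 0 := by rw [majProb_three]; norm_num
    have k1 : kern n 0 1 = 0 := by
      rw [kern, show (1:ℕ) = 0 + 1 from rfl, seqKernel_succ]
      unfold Kp
      rw [hq0, mul_zero]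
      simp
    have k0 : kern n 0 0 = 1 := by
      rw [kern, seqKernel_self]
      unfold K0 Kp Km
      rw [hq0]
      norm_num
    rw [Finset.sum_insert (by decide), Finset.sum_singleton, k1, k0]
    simp
  · have supp : ∀ u : ℕ, u ∉ ({s+1, s-1, s} : Finset ℕ) → kern n s u = 0 := by
      intro u hu
      simp only [Finset.mem_insert, Finset.mem_singleton] at hu
      push_neg at hu
      rw [kern, seqKernel_zero n s u hu.1 (by omega) hu.2.2]
      simp
    rw [tsum_eq_sum supp]
    rw [Finset.sum_insert (by simp; omega), Finset.sum_insert (by simp; omega),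
        Finset.sum_singleton, ← add_assoc]
    exact kern_sum_le n hn s h1 hs

lemma Mass_le_one {n : ℕ} (hn : 0 < n) : ∀ T s, s ≤ n → Mass n T s ≤ 1 := by
  intro T
  induction T with
  | zero => intro s _; rw [Mass_zero]
  | succ T ih =>
    intro s hs
    rw [Mass_succ]
    calc ∑' u : ℕ, kern n s u * Mass n T u ≤ ∑' u : ℕ, kern n s u := by
          apply ENNReal.tsum_le_tsum
          intro u
          rcases le_or_gt u n with hu | hu
          · calc kern n s u * Mass n T u ≤ kern n s u * 1 := by gcongr; exact ih u hu
              _ = kern n s u := mul_one _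
          · rw [kern_vanish hn hs hu, zero_mul]
      _ ≤ 1 := kern_tsum_le_one hn hs

end Stmt14

namespace Stmt14

open scoped Classical

lemma GoodF_cons {aG B : ℕ} (haB : aG ≤ B) {T : ℕ} (s : ℕ) (w : Fin (T+1) → ℕ) :
    GoodF aG B (Fin.cons s w) ↔ aG < s ∧ (B < s ∨ GoodF aG B w) := by
  constructor
  · rintro ⟨t, ht, hall⟩
    induction t using Fin.cases with
    | zero =>
      rw [Fin.cons_zero] at ht
      have h0 : aG < s := by omega
      exact ⟨h0, Or.inl ht⟩
    | succ t0 =>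
      rw [Fin.cons_succ] at ht
      have h0 : aG < s := by
        have := hall 0 (Fin.zero_le _)
        rwa [Fin.cons_zero] at this
      refine ⟨h0, Or.inr ⟨t0, ht, ?_⟩⟩
      intro t' ht'
      have := hall t'.succ (by rwa [Fin.succ_le_succ_iff])
      rwa [Fin.cons_succ] at this
  · rintro ⟨h0, hBs | ⟨t0, ht, hall⟩⟩
    · refine ⟨0, ?_, ?_⟩
      · rwa [Fin.cons_zero]
      · intro t' ht'
        rw [Fin.le_zero_iff] at ht'
        subst ht'
        rwa [Fin.cons_zero]
    · refine ⟨t0.succ, by rwa [Fin.cons_succ], ?_⟩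
      intro t' ht'
      induction t' using Fin.cases with
      | zero => rwa [Fin.cons_zero]
      | succ t'' =>
        rw [Fin.cons_succ]
        exact hall t'' (by rwa [← Fin.succ_le_succ_iff])

lemma SSs_le_RR {n : ℕ} (hn : 0 < n) {aG B : ℕ} (h1 : 1 ≤ aG) (hB : B ≤ n) (haB : aG ≤ B) :
    ∀ T s, SSs n aG B T s ≤ RR n aG B T s := by
  intro T
  induction T with
  | zero =>
    intro s
    unfold SSs
    rw [← Equiv.tsum_eq (Equiv.funUnique (Fin 1) ℕ).symm]
    have key : ∀ u : ℕ,
        (if ((Equiv.funUnique (Fin 1) ℕ).symm u) 0 = s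
            ∧ ¬ GoodF aG B ((Equiv.funUnique (Fin 1) ℕ).symm u)
          then pathW n ((Equiv.funUnique (Fin 1) ℕ).symm u) else 0)
        = if u = s ∧ ¬ (B < u ∧ aG < u) then 1 else 0 := by
      intro u
      rw [pathW_zero]
      have h : ∀ i : Fin 1, ((Equiv.funUnique (Fin 1) ℕ).symm u) i = u := fun i => rfl
      have hg : GoodF aG B ((Equiv.funUnique (Fin 1) ℕ).symm u) ↔ (B < u ∧ aG < u) := by
        constructor
        · rintro ⟨t, ht, hall⟩
          rw [h t] at ht
          have := hall t (le_refl t)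
          rw [h t] at this
          exact ⟨ht, this⟩
        · rintro ⟨hBu, hau⟩
          exact ⟨0, by rw [h 0]; exact hBu, fun t' _ => by rw [h t']; exact hau⟩
      by_cases hu : u = s ∧ ¬ (B < u ∧ aG < u)
      · rw [if_pos hu, if_pos]
        exact ⟨hu.1, by rw [hg]; exact hu.2⟩
      · rw [if_neg hu, if_neg]
        intro ⟨hc1, hc2⟩
        rw [hg] at hc2
        exact hu ⟨hc1, hc2⟩
    rw [tsum_congr key]
    rcases le_or_gt s aG with h | h
    · rw [RR_of_le h]
      rcases lt_or_ge B s with h2 | h2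
      · omega
      · calc (∑' u : ℕ, if u = s ∧ ¬ (B < u ∧ aG < u) then (1:ℝ≥0∞) else 0)
            ≤ ∑' u : ℕ, if u = s then (1:ℝ≥0∞) else 0 := by
              apply ENNReal.tsum_le_tsum
              intro u
              by_cases hu : u = s ∧ ¬ (B < u ∧ aG < u)
              · rw [if_pos hu, if_pos hu.1]
              · rw [if_neg hu]; exact zero_le
          _ = 1 := by simp
    · rcases lt_or_ge B s with h2 | h2
      · rw [RR_of_gt (by omega) h2]
        have : ∀ u : ℕ, (if u = s ∧ ¬ (B < u ∧ aG < u) then (1:ℝ≥0∞) else 0) = 0 := by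
          intro u
          rw [if_neg]
          rintro ⟨rfl, hc⟩
          exact hc ⟨h2, h⟩
        rw [tsum_congr this]
        simp
      · rw [RR_zero_band (by omega)]
        calc (∑' u : ℕ, if u = s ∧ ¬ (B < u ∧ aG < u) then (1:ℝ≥0∞) else 0)
            ≤ ∑' u : ℕ, if u = s then (1:ℝ≥0∞) else 0 := by
              apply ENNReal.tsum_le_tsum
              intro u
              by_cases hu : u = s ∧ ¬ (B < u ∧ aG < u)
              · rw [if_pos hu, if_pos hu.1]
              · rw [if_neg hu]; exact zero_le
          _ = 1 := by simp
  | succ T ih =>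
    intro s
    have expand : SSs n aG B (T+1) s
        = ∑' w : Fin (T+1) → ℕ,
            (if ¬ GoodF aG B (Fin.cons s w) then (1:ℝ≥0∞) else 0)
              * (kern n s (w 0) * pathW n w) := by
      calc SSs n aG B (T+1) s
          = ∑' v : Fin (T+2) → ℕ,
              (if v 0 = s ∧ ¬ GoodF aG B v then (1:ℝ≥0∞) else 0) * pathW n v := by
            unfold SSs
            apply tsum_congr; intro v
            by_cases h : v 0 = s ∧ ¬ GoodF aG B v <;> simp [h]
        _ = ∑' (a : ℕ) (w : Fin (T+1) → ℕ),
              (if (Fin.cons a w : Fin (T+2) → ℕ) 0 = s ∧ ¬ GoodF aG B (Fin.cons a w)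
                then (1:ℝ≥0∞) else 0) * (kern n a (w 0) * pathW n w) :=
            pathsum_head n T (fun v => if v 0 = s ∧ ¬ GoodF aG B v then 1 else 0)
        _ = ∑' (a : ℕ) (w : Fin (T+1) → ℕ),
              (if a = s ∧ ¬ GoodF aG B (Fin.cons a w) then (1:ℝ≥0∞) else 0)
                * (kern n a (w 0) * pathW n w) := by
            simp only [Fin.cons_zero]
        _ = _ := by
            rw [tsum_eq_single s]
            · apply tsum_congr; intro w
              by_cases h : ¬ GoodF aG B (Fin.cons s w) <;> simp [h]
            · intro a ha
              have : ∀ w : Fin (T+1) → ℕ,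
                  (if a = s ∧ ¬ GoodF aG B (Fin.cons a w) then (1:ℝ≥0∞) else 0)
                    * (kern n a (w 0) * pathW n w) = 0 := by
                intro w
                rw [if_neg (fun hc => ha hc.1), zero_mul]
              rw [tsum_congr this]
              simp
    rcases le_or_gt s aG with h | h
    · rw [RR_of_le h, expand]
      calc (∑' w : Fin (T+1) → ℕ,
              (if ¬ GoodF aG B (Fin.cons s w) then (1:ℝ≥0∞) else 0)
                * (kern n s (w 0) * pathW n w))
          ≤ ∑' w : Fin (T+1) → ℕ, kern n s (w 0) * pathW n w := by
            apply ENNReal.tsum_le_tsum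
            intro w
            by_cases hw : ¬ GoodF aG B (Fin.cons s w)
            · rw [if_pos hw, one_mul]
            · rw [if_neg hw, zero_mul]; exact zero_le
        _ = ∑' u : ℕ, kern n s u * Mass n T u := by
            calc (∑' w : Fin (T+1) → ℕ, kern n s (w 0) * pathW n w)
                = ∑' (w : Fin (T+1) → ℕ) (u : ℕ),
                    (if w 0 = u then kern n s u * pathW n w else 0) := by
                  apply tsum_congr; intro w
                  rw [tsum_eq_single (w 0)]
                  · simp
                  · intro u hu
                    rw [if_neg (by exact fun hh => hu hh.symm)]
              _ = ∑' (u : ℕ) (w : Fin (T+1) → ℕ),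
                    (if w 0 = u then kern n s u * pathW n w else 0) := ENNReal.tsum_comm
              _ = _ := by
                  apply tsum_congr; intro u
                  unfold Mass
                  rw [← ENNReal.tsum_mul_left]
                  apply tsum_congr; intro w
                  by_cases hh : w 0 = u <;> simp [hh]
        _ ≤ ∑' u : ℕ, kern n s u := by
            apply ENNReal.tsum_le_tsum
            intro u
            rcases le_or_gt u n with hu | hu
            · calc kern n s u * Mass n T u
                  ≤ kern n s u * 1 := by gcongr; exact Mass_le_one hn T u hu
                _ = kern n s u := mul_one _
            · rw [kern_vanish hn (by omega) hu, zero_mul]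
        _ ≤ 1 := kern_tsum_le_one hn (by omega)
    · rcases lt_or_ge B s with h2 | h2
      · rw [RR_of_gt (by omega) h2, expand]
        have : ∀ w : Fin (T+1) → ℕ,
            (if ¬ GoodF aG B (Fin.cons s w) then (1:ℝ≥0∞) else 0)
              * (kern n s (w 0) * pathW n w) = 0 := by
          intro w
          rw [if_neg, zero_mul]
          intro hc
          exact hc ((GoodF_cons haB s w).mpr ⟨by omega, Or.inl h2⟩)
        rw [tsum_congr this]
        simp
      · -- band case
        rw [RR_band (by omega) (by omega), expand]
        have decomp : ∀ w : Fin (T+1) → ℕ,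
            (if ¬ GoodF aG B (Fin.cons s w) then (1:ℝ≥0∞) else 0)
            = (if w 0 = w 0 ∧ ¬ GoodF aG B w then (1:ℝ≥0∞) else 0) := by
          intro w
          by_cases hw : GoodF aG B w
          · have hcons : GoodF aG B (Fin.cons s w) := (GoodF_cons haB s w).mpr ⟨h, Or.inr hw⟩
            rw [if_neg (fun hc => hc hcons), if_neg (fun hc => hc.2 hw)]
          · have hcons : ¬ GoodF aG B (Fin.cons s w) := by
              intro hg
              rcases ((GoodF_cons haB s w).mp hg).2 with h2' | h2'
              · omega
              · exact hw h2'
            rw [if_pos hcons, if_pos ⟨rfl, hw⟩]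
        calc (∑' w : Fin (T+1) → ℕ,
                (if ¬ GoodF aG B (Fin.cons s w) then (1:ℝ≥0∞) else 0)
                  * (kern n s (w 0) * pathW n w))
            = ∑' w : Fin (T+1) → ℕ,
                kern n s (w 0) * (if w 0 = w 0 ∧ ¬ GoodF aG B w then pathW n w else 0) := by
              apply tsum_congr; intro w
              rw [decomp w]
              by_cases hw : ¬ GoodF aG B w
              · rw [if_pos ⟨rfl, hw⟩, if_pos ⟨rfl, hw⟩, one_mul]
              · rw [if_neg (fun hc => hw hc.2), if_neg (fun hc => hw hc.2), zero_mul, mul_zero]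
          _ = ∑' (w : Fin (T+1) → ℕ) (u : ℕ),
                kern n s u * (if w 0 = u ∧ ¬ GoodF aG B w then pathW n w else 0) := by
              apply tsum_congr; intro w
              rw [tsum_eq_single (w 0)]
              intro u hu
              rw [if_neg (show ¬ (w 0 = u ∧ ¬ GoodF aG B w) from fun hc => hu hc.1.symm),
                  mul_zero]
          _ = ∑' (u : ℕ) (w : Fin (T+1) → ℕ),
                kern n s u * (if w 0 = u ∧ ¬ GoodF aG B w then pathW n w else 0) :=
              ENNReal.tsum_comm
          _ = ∑' u : ℕ, kern n s u * SSs n aG B T u := by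
              apply tsum_congr; intro u
              unfold SSs
              rw [← ENNReal.tsum_mul_left]
          _ ≤ ∑' u : ℕ, kern n s u * RR n aG B T u := by
              apply ENNReal.tsum_le_tsum
              intro u
              gcongr
              exact ih u
          _ = kern n s (s+1) * RR n aG B T (s+1) + kern n s (s-1) * RR n aG B T (s-1)
              + kern n s s * RR n aG B T s := by
              have supp : ∀ u : ℕ, u ∉ ({s+1, s-1, s} : Finset ℕ) →
                  kern n s u * RR n aG B T u = 0 := by
                intro u hu
                simp only [Finset.mem_insert, Finset.mem_singleton] at hu
                push_neg at hu
                rw [kern, seqKernel_zero n s u hu.1 (by omega) hu.2.2]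
                simp
              rw [tsum_eq_sum supp]
              rw [Finset.sum_insert (by simp; omega), Finset.sum_insert (by simp; omega),
                  Finset.sum_singleton, ← add_assoc]

end Stmt14

namespace Stmt14

open scoped Classical

lemma cylinder {Ω : Type} [MeasurableSpace Ω] {μ : Measure Ω} {X : ℕ → Ω → ℕ}
    {n x : ℕ} (hX : IsMarkovChain μ (seqKernel n 3) x X) (p : ℕ → ℕ) :
    ∀ t : ℕ, μ {ω | ∀ i ≤ t, X i ω = p i}
      = (if p 0 = x then 1 else 0) * ∏ i ∈ Finset.range t, kern n (p i) (p (i+1)) := by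
  haveI : IsProbabilityMeasure μ := hX.1
  intro t
  induction t with
  | zero =>
    have seteq : {ω | ∀ i ≤ 0, X i ω = p i} = {ω | X 0 ω = p 0} := by
      ext ω; simp [Nat.le_zero]
    rw [seteq, Finset.range_zero, Finset.prod_empty, mul_one]
    by_cases h : p 0 = x
    · rw [if_pos h, h]
      exact hX.2.2.1
    · rw [if_neg h]
      have hmeas : MeasurableSet {ω | X 0 ω = x} := by
        have : {ω | X 0 ω = x} = X 0 ⁻¹' {x} := by ext ω; simp
        rw [this]
        exact hX.2.1 0 (measurableSet_singleton x)
      have hc : μ {ω | X 0 ω = x}ᶜ = 0 := by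
        rw [measure_compl hmeas (measure_ne_top μ _), hX.2.2.1, measure_univ]
        simp
      have hsub : {ω | X 0 ω = p 0} ⊆ {ω | X 0 ω = x}ᶜ := by
        intro ω hω hωx
        exact h (hω.symm.trans hωx)
      exact le_antisymm (le_trans (measure_mono hsub) (le_of_eq hc)) (zero_le)
  | succ t ih =>
    have seteq : {ω | ∀ i ≤ t+1, X i ω = p i}
        = {ω | X (t+1) ω = p (t+1)} ∩ {ω | ∀ i ≤ t, X i ω = p i} := by
      ext ω
      constructor
      · intro h
        exact ⟨h (t+1) le_rfl, fun i hi => h i (le_trans hi (Nat.le_succ t))⟩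
      · rintro ⟨h1, h2⟩ i hi
        rcases Nat.eq_or_lt_of_le hi with rfl | hlt
        · exact h1
        · exact h2 i (by omega)
    rw [seteq, hX.2.2.2 t p (p (t+1)), ih, Finset.prod_range_succ]
    show ENNReal.ofReal (seqKernel n 3 (p t) (p (t+1))) * _ = _
    rw [show ENNReal.ofReal (seqKernel n 3 (p t) (p (t+1))) = kern n (p t) (p (t+1)) from rfl]
    ring

/-- Extension of a finite path to `ℕ`. -/
def pE {T : ℕ} (v : Fin (T+1) → ℕ) : ℕ → ℕ := fun i => if h : i < T+1 then v ⟨i, h⟩ else 0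

lemma pE_zero {T : ℕ} (v : Fin (T+1) → ℕ) : pE v 0 = v 0 := by
  unfold pE
  rw [dif_pos (by omega : 0 < T+1)]
  exact congrArg v (Fin.ext rfl)

lemma prod_pE {n T : ℕ} (v : Fin (T+1) → ℕ) :
    ∏ i ∈ Finset.range T, kern n (pE v i) (pE v (i+1)) = pathW n v := by
  rw [← Fin.prod_univ_eq_prod_range (fun i => kern n (pE v i) (pE v (i+1))) T]
  unfold pathW
  apply Finset.prod_congr rfl
  intro i _
  unfold pE
  rw [dif_pos (by omega : (i:ℕ) < T+1), dif_pos (by omega : (i:ℕ)+1 < T+1)]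
  congr 1 <;> exact congrArg v (Fin.ext rfl)

lemma mu_bad {Ω : Type} [MeasurableSpace Ω] {μ : Measure Ω} {X : ℕ → Ω → ℕ}
    {n x : ℕ} (hX : IsMarkovChain μ (seqKernel n 3) x X) (aG B T : ℕ) :
    μ {ω | ¬ GoodF aG B (fun i : Fin (T+1) => X i ω)} ≤ SSs n aG B T x := by
  have cover : {ω | ¬ GoodF aG B (fun i : Fin (T+1) => X i ω)}
      ⊆ ⋃ (v : {v : Fin (T+1) → ℕ // ¬ GoodF aG B v}),
          {ω | ∀ i : Fin (T+1), X i ω = (v : Fin (T+1) → ℕ) i} := by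
    intro ω hω
    exact Set.mem_iUnion.mpr ⟨⟨fun i => X i ω, hω⟩, fun i => rfl⟩
  have cyl_eq : ∀ v : Fin (T+1) → ℕ,
      μ {ω | ∀ i : Fin (T+1), X i ω = v i}
        = (if v 0 = x then 1 else 0) * pathW n v := by
    intro v
    have seteq : {ω | ∀ i : Fin (T+1), X i ω = v i} = {ω | ∀ i ≤ T, X i ω = pE v i} := by
      ext ω
      constructor
      · intro h i hi
        unfold pE
        rw [dif_pos (by omega : i < T+1)]
        exact h ⟨i, by omega⟩
      · intro h i
        have := h i (by omega : (i:ℕ) ≤ T)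
        unfold pE at this
        rw [dif_pos i.isLt] at this
        rwa [Fin.eta] at this
    rw [seteq, cylinder hX (pE v) T, pE_zero, prod_pE]
  calc μ {ω | ¬ GoodF aG B (fun i : Fin (T+1) => X i ω)}
      ≤ μ (⋃ (v : {v : Fin (T+1) → ℕ // ¬ GoodF aG B v}),
          {ω | ∀ i : Fin (T+1), X i ω = (v : Fin (T+1) → ℕ) i}) := measure_mono cover
    _ ≤ ∑' v : {v : Fin (T+1) → ℕ // ¬ GoodF aG B v},
          μ {ω | ∀ i : Fin (T+1), X i ω = (v : Fin (T+1) → ℕ) i} := measure_iUnion_le _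
    _ = ∑' v : {v : Fin (T+1) → ℕ // ¬ GoodF aG B v},
          (if ((v : Fin (T+1) → ℕ)) 0 = x then 1 else 0) * pathW n (v : Fin (T+1) → ℕ) := by
        apply tsum_congr; intro v
        exact cyl_eq v
    _ = ∑' v : Fin (T+1) → ℕ, Set.indicator {v | ¬ GoodF aG B v}
          (fun v => (if v 0 = x then (1:ℝ≥0∞) else 0) * pathW n v) v :=
        tsum_subtype {v : Fin (T+1) → ℕ | ¬ GoodF aG B v}
          (fun v => (if v 0 = x then (1:ℝ≥0∞) else 0) * pathW n v)
    _ ≤ SSs n aG B T x := by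
        unfold SSs
        apply ENNReal.tsum_le_tsum
        intro v
        by_cases hv : ¬ GoodF aG B v
        · rw [Set.indicator_of_mem (by exact hv)]
          by_cases hx : v 0 = x
          · rw [if_pos hx, one_mul, if_pos ⟨hx, hv⟩]
          · rw [if_neg hx, zero_mul]
            exact zero_le
        · rw [Set.indicator_of_notMem (by exact hv)]
          exact zero_le

end Stmt14

namespace Stmt14

/-- Single-phase numeric bound. -/
lemma phase_bound (n A D Mn : ℕ) (av bv sv : ℕ) (L : ℝ)
    (hn : 0 < n) (hL0 : 0 ≤ L)
    (hA : 2*A ≤ n ∧ n ≤ 2*A+1)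
    (hA1 : 10 ≤ A)
    (hMn1 : 1 ≤ Mn) (hDMn : D ≤ Mn) (hMnn : Mn ≤ n)
    (hai : av = A + Mn - 1) (hbi : bv = A + 4*Mn - 1) (hsl : sv = A + 2*Mn - 1)
    (hbin : bv ≤ n) (hbi45 : 5*bv ≤ 4*n)
    (hDsq : n*L/8 ≤ (D:ℝ)^2) :
    ∀ s, sv < s → RR n av bv (2^18*n) s ≤ ENNReal.ofReal (2*Real.exp (-(L/64))) := by
  intro s hs
  have hnR : (0:ℝ) < n := by exact_mod_cast hn
  have hM1 : (1:ℝ) ≤ (Mn:ℝ) := by exact_mod_cast hMn1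
  have hMD : (D:ℝ) ≤ (Mn:ℝ) := by exact_mod_cast hDMn
  have hMn' : (Mn:ℝ) ≤ (n:ℝ) := by exact_mod_cast hMnn
  have hAR1 : (A:ℝ) ≤ (n:ℝ)/2 := by
    have h := hA.1
    have h' : ((2*A : ℕ):ℝ) ≤ ((n:ℕ):ℝ) := by exact_mod_cast h
    push_cast at h'
    linarith
  have hAR2 : (n:ℝ)/2 - 1/2 ≤ (A:ℝ) := by
    have h := hA.2
    have h' : ((n:ℕ):ℝ) ≤ ((2*A+1 : ℕ):ℝ) := by exact_mod_cast h
    push_cast at h'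
    linarith
  set Dl : ℝ := (Mn:ℝ) / (8 * n) with hDldef
  have hDl0 : 0 < Dl := by positivity
  have hDl1 : Dl ≤ 1 := by
    rw [hDldef, div_le_one (by positivity)]
    linarith
  have hMsq : L / 64 ≤ (Mn:ℝ)^2 / (8 * n) := by
    rw [div_le_div_iff₀ (by norm_num) (by positivity)]
    have hDM2 : (D:ℝ)^2 ≤ (Mn:ℝ)^2 := by nlinarith
    nlinarith [hDsq]
  have hdrift : ∀ u : ℕ, av < u → u ≤ bv → Dl ≤ majProb n 3 u - (u:ℝ)/n := by
    intro u hu1 hu2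
    have huA : A + Mn ≤ u := by omega
    have huAR : (A:ℝ) + (Mn:ℝ) ≤ (u:ℝ) := by exact_mod_cast huA
    have hu45n : 5 * u ≤ 4 * n := le_trans (by omega) hbi45
    have hu45 : (u:ℝ) ≤ (4/5) * n := by
      have h5 : ((5 * u : ℕ) : ℝ) ≤ ((4 * n : ℕ) : ℝ) := by exact_mod_cast hu45n
      push_cast at h5
      linarith
    have huhalf : (n:ℝ)/2 < u := by linarith
    have hdr := drift n u hn huhalf hu45
    have hgap : (Mn:ℝ) / (2 * n) ≤ (u:ℝ)/n - 1/2 := by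
      rw [div_le_iff₀ (by positivity : (0:ℝ) < 2*n)]
      have he : ((u:ℝ)/n - 1/2) * (2*n) = 2*(u:ℝ) - n := by
        field_simp
      rw [he]
      linarith
    calc Dl = ((Mn:ℝ)/(2*n))/4 := by rw [hDldef]; ring
      _ ≤ ((u:ℝ)/n - 1/2)/4 := by linarith
      _ ≤ _ := hdr
  rcases lt_or_ge bv s with hsb | hsb
  · rw [RR_of_gt (show ¬ s ≤ av by omega) hsb]
    exact zero_le
  · have hpot := potent hn (show 1 ≤ av by omega) hbin Dl hDl0 hDl1 hdrift (2^18*n) s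
    refine le_trans hpot ?_
    apply ENNReal.ofReal_le_ofReal
    have hsub : Mn ≤ s - av := by omega
    have hl0' : (0:ℝ) ≤ 1 - Dl := by linarith
    have t1 : (1-Dl)^(s - av) ≤ Real.exp (-(L/64)) := by
      calc (1-Dl)^(s - av) ≤ (1-Dl)^Mn :=
            pow_le_pow_of_le_one hl0' (by linarith) hsub
        _ ≤ (Real.exp (-Dl))^Mn := by
            apply pow_le_pow_left₀ hl0'
            linarith [Real.add_one_le_exp (-Dl)]
        _ = Real.exp (-(Dl * (Mn:ℝ))) := by
            rw [← Real.exp_nat_mul]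
            congr 1
            ring
        _ ≤ Real.exp (-(L/64)) := by
            apply Real.exp_le_exp.mpr
            have he : Dl * (Mn:ℝ) = (Mn:ℝ)^2/(8*n) := by rw [hDldef]; ring
            rw [he]
            linarith
    have t2 : Real.exp ((Dl/4) * ((bv : ℝ) - s)) * (1 - Dl^2/8)^(2^18*n)
        ≤ Real.exp (-(L/64)) := by
      have hbis : ((bv : ℝ) - s) ≤ 3 * (Mn:ℝ) := by
        have h1 : av ≤ s := by omega
        have h2 : bv = av + 3 * Mn := by omega
        have h3 : (bv : ℝ) = (av : ℝ) + 3*(Mn:ℝ) := by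
          exact_mod_cast congrArg (Nat.cast : ℕ → ℝ) h2
        have hsR : ((av : ℕ) : ℝ) ≤ (s:ℝ) := by exact_mod_cast h1
        linarith
      have hq0 : (0:ℝ) ≤ 1 - Dl^2/8 := by nlinarith
      calc Real.exp ((Dl/4) * ((bv:ℝ) - s)) * (1 - Dl^2/8)^(2^18*n)
          ≤ Real.exp ((Dl/4) * (3*(Mn:ℝ))) * (Real.exp (-(Dl^2/8)))^(2^18*n) := by
            apply mul_le_mul
            · exact Real.exp_le_exp.mpr (by nlinarith)
            · apply pow_le_pow_left₀ hq0
              linarith [Real.add_one_le_exp (-(Dl^2/8))]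
            · positivity
            · positivity
        _ = Real.exp ((Dl/4)*(3*(Mn:ℝ)) + ((2^18*n : ℕ):ℝ) * (-(Dl^2/8))) := by
            rw [← Real.exp_nat_mul, ← Real.exp_add]
        _ ≤ Real.exp (-(L/64)) := by
            apply Real.exp_le_exp.mpr
            have hT0R : ((2^18*n : ℕ):ℝ) = 2^18 * (n:ℝ) := by
              push_cast
              ring
            rw [hT0R]
            have e1 : (Dl/4)*(3*(Mn:ℝ)) = (3/4)*((Mn:ℝ)^2/(8*n)) := by
              rw [hDldef]
              field_simp
            have e2 : ((2:ℝ)^18*(n:ℝ)) * (Dl^2/8) = 4096*((Mn:ℝ)^2/(8*n)) := by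
              rw [hDldef]
              field_simp
              ring
            have hz0 : (0:ℝ) ≤ (Mn:ℝ)^2/(8*n) := by positivity
            nlinarith [hMsq, e1, e2, hz0]
    linarith

/-- Composition over phases. -/
lemma climb (n aG T0 K : ℕ) (av bv : ℕ → ℕ) (U : ℝ≥0∞)
    (hn : 0 < n) (haG1 : 1 ≤ aG) (hbiKn : bv K ≤ n)
    (hmono_a : ∀ i, i ≤ K → aG ≤ av i)
    (hPH : ∀ i, i + 1 ≤ K → ∀ s, bv i < s → RR n (av (i+1)) (bv (i+1)) T0 s ≤ U) :
    ∀ d, d ≤ K → ∀ s, RR n aG (bv K) ((d+1)*T0) s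
      ≤ RR n (av (K-d)) (bv (K-d)) T0 s + (d:ℝ≥0∞) * U := by
  intro d
  induction d with
  | zero =>
    intro _ s
    have hmono := RR_mono_a hn haG1 hbiKn (hmono_a K (le_refl K)) T0 s
    simpa using hmono
  | succ d ih =>
    intro hdK s
    have hjd : K - d = (K - (d+1)) + 1 := by omega
    have hMtail : ∀ s', bv (K - (d+1)) < s' →
        RR n aG (bv K) ((d+1)*T0) s' ≤ U + (d:ℝ≥0∞)*U := by
      intro s' hs'
      have h1 := ih (by omega) s'
      rw [hjd] at h1
      have h2 := hPH (K-(d+1)) (by omega) s' hs'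
      calc RR n aG (bv K) ((d+1)*T0) s'
          ≤ RR n (av ((K-(d+1))+1)) (bv ((K-(d+1))+1)) T0 s' + (d:ℝ≥0∞)*U := h1
        _ ≤ U + (d:ℝ≥0∞)*U := by gcongr
    have hcomp := RR_comp hn hbiKn haG1 (hmono_a (K-(d+1)) (by omega))
      ((d+1)*T0) (U + (d:ℝ≥0∞)*U) hMtail T0 s
    have harith : T0 + (d+1)*T0 = (d+1+1)*T0 := by ring
    rw [harith] at hcomp
    refine le_trans hcomp ?_
    have hcast : ((d+1:ℕ):ℝ≥0∞) * U = U + (d:ℝ≥0∞)*U := by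
      push_cast
      ring
    rw [hcast]

end Stmt14

namespace Stmt14

set_option maxHeartbeats 1600000 in
lemma main (n : ℕ)
    (hn8 : 20 ≤ n)
    (hsqrt8 : 8 ≤ Real.sqrt (n * Real.log n))
    (hsqrtn : 20 * (Real.sqrt (n * Real.log n) / 2) + 20 ≤ (n:ℝ))
    (hlog2 : 4 ≤ Real.log n)
    (hpow : 4 * Real.log n + 2 ≤ (n:ℝ) ^ ((1:ℝ)/128)) :
    ∀ x, x ≤ n → (n:ℝ)/2 + Real.sqrt (n * Real.log n) ≤ x →
    ∀ (Ω : Type) [MeasurableSpace Ω], ∀ (μ : MeasureTheory.Measure Ω) (X : ℕ → Ω → ℕ),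
      IsMarkovChain μ (seqKernel n 3) x X →
      ENNReal.ofReal (1 - (n:ℝ) ^ (-(1/128:ℝ))) ≤
        μ {ω | ∃ t : ℕ, (t : ℝ) ≤ 524288 * n * Real.log n ∧
              (1 + (1/10:ℝ)) * n / 2 < (X t ω : ℝ) ∧
              ∀ t' ≤ t, (n : ℝ) / 2 < (X t' ω : ℝ)} := by
  intro x hxn hxlower Ω _ μ X hX
  haveI : IsProbabilityMeasure μ := hX.1
  have hn : 0 < n := by omega
  have hnR : (0:ℝ) < n := by exact_mod_cast hn
  set L : ℝ := Real.log n with hLdef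
  set S : ℝ := Real.sqrt (n * L) with hSdef
  have hL0 : 0 ≤ L := by linarith
  have hS0 : 0 ≤ S := Real.sqrt_nonneg _
  have hSsq : S^2 = n * L := Real.sq_sqrt (by positivity)
  set D : ℕ := ⌊S/2⌋₊ with hDdef
  have hD1 : (D:ℝ) ≤ S/2 := Nat.floor_le (by positivity)
  have hD2 : S/2 - 1 ≤ (D:ℝ) := by
    have := Nat.lt_floor_add_one (S/2)
    linarith
  have hD3 : 3 ≤ D := by
    have : (3:ℝ) ≤ (D:ℝ) := by linarith
    exact_mod_cast this
  have hDsq : n * L / 8 ≤ (D:ℝ)^2 := by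
    have hSle : S ≤ n*L/8 := by nlinarith [hSsq, hsqrt8]
    nlinarith [hD2, hSsq, hsqrt8]
  have hDn : 20 * D + 20 ≤ n := by
    have h : (20 * D + 20 : ℝ) ≤ (n:ℝ) := by
      push_cast
      nlinarith [hD1, hsqrtn]
    exact_mod_cast h
  -- levels
  set A : ℕ := n / 2 with hAdef
  set B : ℕ := 11 * n / 20 with hBdef
  have hAn : 2 * A ≤ n ∧ n ≤ 2 * A + 1 := by omega
  have hAR1 : (A:ℝ) ≤ (n:ℝ)/2 := by
    have h' : ((2 * A : ℕ) : ℝ) ≤ ((n:ℕ):ℝ) := by exact_mod_cast hAn.1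
    push_cast at h'
    linarith
  have hAR2 : (n:ℝ)/2 - 1/2 ≤ (A:ℝ) := by
    have h' : ((n:ℕ):ℝ) ≤ ((2*A+1 : ℕ):ℝ) := by exact_mod_cast hAn.2
    push_cast at h'
    linarith
  set aG : ℕ := A + D - 1 with haGdef
  have haG1 : 1 ≤ aG := by omega
  -- K : number of phases
  have hKex : ∃ i, B < A + 2^(i+2) * D - 1 := by
    refine ⟨n, ?_⟩
    have h2n : n < 2^n := Nat.lt_two_pow_self
    have hmul : 4 * (n+1) * 3 ≤ 2^(n+2) * D := by
      have h1 : 2^(n+2) = 4 * 2^n := by ring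
      rw [h1]
      exact Nat.mul_le_mul (by omega) hD3
    omega
  set K : ℕ := Nat.find hKex with hKdef
  have hK : B < A + 2^(K+2) * D - 1 := Nat.find_spec hKex
  have hKmin : ∀ j, j < K → A + 2^(j+2) * D - 1 ≤ B := by
    intro j hj
    have := Nat.find_min hKex hj
    omega
  set m : ℕ := 2^K * D with hmdef
  have hm1 : K ≥ 1 → A + 2 * m - 1 ≤ B := by
    intro hK1
    have h := hKmin (K-1) (by omega)
    have he2 : 2^(K-1+2) * D = 2 * m := by
      rw [hmdef, show K-1+2 = K+1 by omega, pow_succ]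
      ring
    omega
  have hmD : D ≤ m := by
    have h1 : 1 ≤ 2^K := Nat.one_le_two_pow
    calc D = 1 * D := (one_mul D).symm
      _ ≤ 2^K * D := Nat.mul_le_mul_right D h1
  have hmn : m ≤ n := by
    rcases Nat.eq_zero_or_pos K with hK0 | hK1
    · have : m = D := by rw [hmdef, hK0, pow_zero, one_mul]
      omega
    · have := hm1 hK1
      omega
  have hbiK4 : 2^(K+2) * D = 4 * m := by
    rw [hmdef, show K+2 = K+2 from rfl, pow_add]
    ring
  have hbiK45 : 5 * (A + 2^(K+2) * D - 1) ≤ 4 * n := by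
    rw [hbiK4]
    rcases Nat.eq_zero_or_pos K with hK0 | hK1
    · have : m = D := by rw [hmdef, hK0, pow_zero, one_mul]
      omega
    · have := hm1 hK1
      omega
  have hbiKn : A + 2^(K+2) * D - 1 ≤ n := by omega
  -- x position
  have hx2D : A + 2 * D ≤ x := by
    have h : ((A + 2*D : ℕ) : ℝ) ≤ (x:ℝ) := by
      push_cast
      have : 2 * (D:ℝ) ≤ S := by linarith
      linarith [hAR1, hxlower]
    exact_mod_cast h
  set U : ℝ≥0∞ := ENNReal.ofReal (2 * Real.exp (-(L/64))) with hUdef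
  -- per-phase bound via phase_bound
  have PH : ∀ i, i ≤ K → ∀ s, A + 2^(i+1) * D - 1 < s →
      RR n (A + 2^i * D - 1) (A + 2^(i+2) * D - 1) (2^18*n) s ≤ U := by
    intro i hi s hs
    have h2i1 : 1 ≤ 2^i := Nat.one_le_two_pow
    have hpowm : 2^i * D ≤ m := by
      have h1 : 2^i ≤ 2^K := Nat.pow_le_pow_right (by omega) hi
      exact Nat.mul_le_mul_right D h1
    have hDMn : D ≤ 2^i * D := by
      calc D = 1 * D := (one_mul D).symm
        _ ≤ 2^i * D := Nat.mul_le_mul_right D h2i1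
    have he2 : 2^(i+2) * D = 4 * (2^i * D) := by rw [pow_add]; ring
    have he1 : 2^(i+1) * D = 2 * (2^i * D) := by rw [pow_add]; ring
    have hb45 : 5 * (A + 2^(i+2) * D - 1) ≤ 4 * n := by
      have hmono : 2^(i+2) ≤ 2^(K+2) := Nat.pow_le_pow_right (by omega) (by omega)
      have : 2^(i+2) * D ≤ 2^(K+2) * D := Nat.mul_le_mul_right D hmono
      omega
    exact phase_bound n A D (2^i * D) _ _ _ L hn hL0 hAn (by omega)
      (by omega) hDMn (le_trans hpowm hmn) rfl (by omega) (by omega)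
      (by omega) hb45 hDsq s hs
  -- composition
  have hclimb := climb n aG (2^18*n) K (fun i => A + 2^i * D - 1)
    (fun i => A + 2^(i+2) * D - 1) U hn haG1 hbiKn
    (by
      intro i hi
      have h2i1 : 1 ≤ 2^i := Nat.one_le_two_pow
      have : D ≤ 2^i * D := by
        calc D = 1 * D := (one_mul D).symm
          _ ≤ 2^i * D := Nat.mul_le_mul_right D h2i1
      show aG ≤ A + 2^i * D - 1
      omega)
    (by
      intro i hi1 s hs
      exact PH (i+1) hi1 s hs)
    K (le_refl K)
  rw [Nat.sub_self] at hclimb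
  have hx_start : A + 2^(0+1) * D - 1 < x := by
    have : (2:ℕ)^(0+1) = 2 := by norm_num
    rw [this]
    omega
  have hBleaG : aG ≤ B := by omega
  have hBlen : B ≤ n := by omega
  have hfail : RR n aG B ((K+1)*(2^18*n)) x ≤ ((K:ℝ≥0∞) + 1) * U := by
    have h1 : RR n aG B ((K+1)*(2^18*n)) x ≤ RR n aG (A + 2^(K+2) * D - 1) ((K+1)*(2^18*n)) x :=
      RR_mono_b hn haG1 hbiKn (le_of_lt hK) _ x
    have h3 : RR n (A + 2^0 * D - 1) (A + 2^(0+2) * D - 1) (2^18*n) x ≤ U :=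
      PH 0 (by omega) x hx_start
    calc RR n aG B ((K+1)*(2^18*n)) x
        ≤ RR n aG (A + 2^(K+2) * D - 1) ((K+1)*(2^18*n)) x := h1
      _ ≤ RR n (A + 2^0 * D - 1) (A + 2^(0+2) * D - 1) (2^18*n) x + (K:ℝ≥0∞)*U :=
          hclimb x
      _ ≤ U + (K:ℝ≥0∞)*U := by gcongr
      _ = ((K:ℝ≥0∞)+1)*U := by ring
  -- numeric bound on (K+1)·U
  have h2Kn : 2^K ≤ n := by
    have h1 : 2^K ≤ 2^K * D := by
      calc 2^K = 2^K * 1 := (mul_one _).symm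
        _ ≤ 2^K * D := Nat.mul_le_mul_left _ (by omega)
    omega
  have hKlog : (K:ℝ) * Real.log 2 ≤ L := by
    have h1 : ((2:ℝ))^K ≤ (n:ℝ) := by exact_mod_cast h2Kn
    have h2 := Real.log_le_log (by positivity) h1
    rwa [Real.log_pow] at h2
  have hlog2d : (0.6931471803:ℝ) < Real.log 2 := Real.log_two_gt_d9
  have hK0' : (0:ℝ) ≤ (K:ℝ) := Nat.cast_nonneg K
  have hK2L : (K:ℝ) + 1 ≤ 2 * L - 1 := by
    have hprod : (K:ℝ) * 0.6931471803 ≤ (K:ℝ) * Real.log 2 :=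
      mul_le_mul_of_nonneg_left hlog2d.le hK0'
    linarith
  have hrwneg : (n:ℝ)^(-(1/128:ℝ)) = Real.exp (-(L/128)) := by
    rw [Real.rpow_def_of_pos hnR]
    congr 1
    rw [hLdef]
    ring
  have hrwpos : (n:ℝ)^((1:ℝ)/128) = Real.exp (L/128) := by
    rw [Real.rpow_def_of_pos hnR]
    congr 1
    rw [hLdef]
    ring
  have hfinalnum : ((K:ℝ≥0∞)+1) * U ≤ ENNReal.ofReal ((n:ℝ)^(-(1/128:ℝ))) := by
    rw [hUdef]
    have e0 : ((K:ℝ≥0∞)+1) = ENNReal.ofReal ((K:ℝ)+1) := by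
      rw [ENNReal.ofReal_add (by positivity) (by norm_num), ENNReal.ofReal_one,
        ENNReal.ofReal_natCast]
    rw [e0, ← ENNReal.ofReal_mul (by positivity)]
    apply ENNReal.ofReal_le_ofReal
    rw [hrwneg]
    rw [hrwpos] at hpow
    have hKe : 2*((K:ℝ)+1) ≤ Real.exp (L/128) := by linarith
    have hsplit : Real.exp (-(L/64)) = Real.exp (-(L/128)) * Real.exp (-(L/128)) := by
      rw [← Real.exp_add]
      congr 1
      ring
    have hexp1 : Real.exp (-(L/128)) * Real.exp (L/128) = 1 := by
      rw [← Real.exp_add]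
      simp
    have ha := Real.exp_pos (-(L/128))
    have key := mul_le_mul_of_nonneg_right hKe (mul_pos ha ha).le
    calc ((K:ℝ)+1)*(2*Real.exp (-(L/64)))
        = 2*((K:ℝ)+1) * (Real.exp (-(L/128)) * Real.exp (-(L/128))) := by
          rw [hsplit]
          ring
      _ ≤ Real.exp (L/128) * (Real.exp (-(L/128)) * Real.exp (-(L/128))) := key
      _ = (Real.exp (-(L/128)) * Real.exp (L/128)) * Real.exp (-(L/128)) := by ring
      _ = Real.exp (-(L/128)) := by rw [hexp1, one_mul]
  -- measure part
  set Ttot : ℕ := (K+1) * (2^18*n) with hTtotdef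
  set E : Set Ω := {ω | GoodF aG B (fun i : Fin (Ttot+1) => X i ω)} with hEdef
  have hbad : μ Eᶜ ≤ ENNReal.ofReal ((n:ℝ)^(-(1/128:ℝ))) := by
    have hEc : Eᶜ = {ω | ¬ GoodF aG B (fun i : Fin (Ttot+1) => X i ω)} := rfl
    rw [hEc]
    calc μ {ω | ¬ GoodF aG B (fun i : Fin (Ttot+1) => X i ω)}
        ≤ SSs n aG B Ttot x := mu_bad hX aG B Ttot
      _ ≤ RR n aG B Ttot x := SSs_le_RR hn haG1 hBlen hBleaG Ttot x
      _ ≤ ((K:ℝ≥0∞)+1)*U := hfail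
      _ ≤ _ := hfinalnum
  have hsubset : E ⊆ {ω | ∃ t : ℕ, (t:ℝ) ≤ 524288 * n * L ∧
      (1+(1/10:ℝ))*n/2 < (X t ω : ℝ) ∧ ∀ t' ≤ t, (n:ℝ)/2 < (X t' ω : ℝ)} := by
    intro ω hω
    obtain ⟨tF, htB, hall⟩ := hω
    refine ⟨(tF:ℕ), ?_, ?_, ?_⟩
    · have h1 : (tF:ℕ) ≤ Ttot := by omega
      have hK1a : (K:ℝ) + 1 ≤ 2*L := by linarith
      have h2 : ((Ttot:ℕ):ℝ) ≤ 524288 * n * L := by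
        rw [hTtotdef]
        push_cast
        nlinarith [hnR, hK1a, hK0', hL0]
      calc ((tF:ℕ):ℝ) ≤ ((Ttot:ℕ):ℝ) := by exact_mod_cast h1
        _ ≤ _ := h2
    · have h1 : B < X (tF:ℕ) ω := htB
      have h2 : 11*n < 20*(X (tF:ℕ) ω) := by omega
      have h3 : (11*(n:ℝ)) < 20*((X (tF:ℕ) ω : ℕ) : ℝ) := by exact_mod_cast h2
      linarith
    · intro t' ht'
      have hlt : t' < Ttot + 1 := by omega
      have hle : (⟨t', hlt⟩ : Fin (Ttot+1)) ≤ tF := by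
        rw [Fin.le_def]
        exact ht'
      have hgt : aG < X t' ω := hall ⟨t', hlt⟩ hle
      have h4 : A + D ≤ X t' ω := by omega
      have h5 : ((A + D : ℕ):ℝ) ≤ ((X t' ω : ℕ):ℝ) := by exact_mod_cast h4
      push_cast at h5
      have hD1R : (1:ℝ) ≤ (D:ℝ) := by exact_mod_cast (show 1 ≤ D by omega)
      linarith
  have hone : (1:ℝ≥0∞) ≤ μ E + μ Eᶜ := by
    calc (1:ℝ≥0∞) = μ Set.univ := (measure_univ (μ := μ)).symm
      _ = μ (E ∪ Eᶜ) := by rw [Set.union_compl_self]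
      _ ≤ μ E + μ Eᶜ := measure_union_le E Eᶜ
  have hmuE : ENNReal.ofReal (1 - (n:ℝ)^(-(1/128:ℝ))) ≤ μ E := by
    have hy0 : 0 ≤ (n:ℝ)^(-(1/128:ℝ)) := Real.rpow_nonneg (le_of_lt hnR) _
    have hyle : 0 ≤ 1 - (n:ℝ)^(-(1/128:ℝ)) := by
      rw [hrwneg]
      have h1 : Real.exp (-(L/128)) ≤ 1 := Real.exp_le_one_iff.mpr (by linarith)
      linarith
    have key : ENNReal.ofReal (1-(n:ℝ)^(-(1/128:ℝ))) + ENNReal.ofReal ((n:ℝ)^(-(1/128:ℝ)))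
        = 1 := by
      rw [← ENNReal.ofReal_add hyle hy0]
      have h1 : 1 - (n:ℝ)^(-(1/128:ℝ)) + (n:ℝ)^(-(1/128:ℝ)) = 1 := by ring
      rw [h1, ENNReal.ofReal_one]
    have h2 : (1:ℝ≥0∞) ≤ μ E + ENNReal.ofReal ((n:ℝ)^(-(1/128:ℝ))) := by
      calc (1:ℝ≥0∞) ≤ μ E + μ Eᶜ := hone
        _ ≤ μ E + ENNReal.ofReal ((n:ℝ)^(-(1/128:ℝ))) := by gcongr
    have h3 : ENNReal.ofReal (1-(n:ℝ)^(-(1/128:ℝ))) + ENNReal.ofReal ((n:ℝ)^(-(1/128:ℝ)))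
        ≤ μ E + ENNReal.ofReal ((n:ℝ)^(-(1/128:ℝ))) := by
      rw [key]
      exact h2
    exact (ENNReal.add_le_add_iff_right ENNReal.ofReal_ne_top).mp h3
  exact le_trans hmuE (measure_mono hsubset)

end Stmt14

namespace Stmt14

open Filter

set_option maxRecDepth 8000 in
theorem evfacts :
    ∀ᶠ n : ℕ in Filter.atTop,
      (20 ≤ n ∧ 8 ≤ Real.sqrt (n * Real.log n)
        ∧ 20 * (Real.sqrt (n * Real.log n) / 2) + 20 ≤ (n:ℝ)
        ∧ 4 ≤ Real.log n
        ∧ 4 * Real.log n + 2 ≤ (n:ℝ) ^ ((1:ℝ)/128)) := by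
  have p1 : ∀ᶠ n : ℕ in atTop, 20 ≤ n := eventually_ge_atTop 20
  have p2 : ∀ᶠ n : ℕ in atTop, 8 ≤ Real.sqrt (n * Real.log n) := by
    filter_upwards [eventually_ge_atTop 64] with n hn
    have hnR : (64:ℝ) ≤ n := by exact_mod_cast hn
    have hL1 : (1:ℝ) ≤ Real.log n := by
      rw [Real.le_log_iff_exp_le (by linarith)]
      have := Real.exp_one_lt_d9
      linarith
    rw [Real.le_sqrt (by norm_num) (by nlinarith)]
    nlinarith
  have p4 : ∀ᶠ n : ℕ in atTop, 4 ≤ Real.log n := by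
    filter_upwards [eventually_ge_atTop 55] with n hn
    have hnR : (55:ℝ) ≤ n := by exact_mod_cast hn
    rw [Real.le_log_iff_exp_le (by linarith)]
    have h4 : Real.exp 4 = (Real.exp 1)^4 := by
      rw [← Real.exp_nat_mul]
      norm_num
    rw [h4]
    have he := Real.exp_one_lt_d9
    have hpos := Real.exp_pos 1
    nlinarith [pow_lt_pow_left₀ he hpos.le (show (4:ℕ) ≠ 0 by norm_num)]
  have p3 : ∀ᶠ n : ℕ in atTop, 20 * (Real.sqrt (n * Real.log n) / 2) + 20 ≤ (n:ℝ) := by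
    filter_upwards [eventually_ge_atTop 41000000] with n hn
    have hnR : (41000000:ℝ) ≤ n := by exact_mod_cast hn
    have hn0 : (0:ℝ) ≤ n := by linarith
    set s : ℝ := Real.sqrt n with hs
    have hs2 : s^2 = n := Real.sq_sqrt hn0
    have hs64 : 6400 ≤ s := by
      rw [hs, show (6400:ℝ) = Real.sqrt (6400^2) by
        rw [show ((6400:ℝ)^2) = 6400*6400 by ring, Real.sqrt_mul_self (by norm_num)]]
      apply Real.sqrt_le_sqrt
      nlinarith
    have hspos : (0:ℝ) < s := by linarith
    have hL2s : Real.log n ≤ 2 * s := by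
      have h1 : Real.log n = 2 * Real.log s := by
        conv_lhs => rw [← Real.mul_self_sqrt hn0]
        rw [Real.log_mul (by positivity) (by positivity), ← hs]
        ring
      have h2 : Real.log s ≤ s - 1 := Real.log_le_sub_one_of_pos hspos
      linarith
    have hL0 : 0 ≤ Real.log n := by
      have : (1:ℝ) ≤ n := by linarith
      exact Real.log_nonneg this
    have hn3 : (n:ℝ)*(2*s) = 2*s^3 := by rw [← hs2]; ring
    have key : (n:ℝ)*Real.log n ≤ 2*s^3 := by
      have := mul_le_mul_of_nonneg_left hL2s hn0
      linarith
    have key2 : 2*s^3 ≤ ((n:ℝ)/40 - 1)^2 := by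
      have hn4 : (n:ℝ)/40 - 1 = s^2/40 - 1 := by rw [← hs2]
      rw [hn4]
      nlinarith [mul_nonneg (sub_nonneg.mpr hs64) (pow_nonneg (le_of_lt hspos) 3),
        mul_nonneg (sq_nonneg s) (show (0:ℝ) ≤ 2*s - 1/20 by linarith)]
    have hsq : Real.sqrt (n * Real.log n) ≤ (n:ℝ)/40 - 1 := by
      rw [Real.sqrt_le_iff]
      refine ⟨by nlinarith, by linarith⟩
    linarith
  have p5 : ∀ᶠ n : ℕ in atTop, 4 * Real.log n + 2 ≤ (n:ℝ) ^ ((1:ℝ)/128) := by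
    filter_upwards [eventually_ge_atTop (1025^256)] with n hn
    have hnR : ((1025:ℝ))^(256:ℕ) ≤ n := by exact_mod_cast hn
    have hn0 : (0:ℝ) < n := by positivity
    set y : ℝ := (n:ℝ) ^ ((1:ℝ)/256) with hy
    have hy1025 : (1025:ℝ) ≤ y := by
      have h1 : ((1025:ℝ)^(256:ℕ)) ^ ((1:ℝ)/256) ≤ (n:ℝ) ^ ((1:ℝ)/256) :=
        Real.rpow_le_rpow (by positivity) hnR (by norm_num)
      have h2 : ((1025:ℝ)^(256:ℕ)) ^ ((1:ℝ)/256) = 1025 := by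
        rw [← Real.rpow_natCast (1025:ℝ) 256, ← Real.rpow_mul (by norm_num)]
        norm_num
      rw [hy]
      rw [h2] at h1
      exact h1
    have hy0 : 0 < y := by linarith
    have hlogy : Real.log y = Real.log n / 256 := by
      rw [hy, Real.log_rpow hn0]
      ring
    have hLy : Real.log n ≤ 256 * y := by
      have h2 : Real.log y ≤ y - 1 := Real.log_le_sub_one_of_pos hy0
      rw [hlogy] at h2
      linarith
    have hsq : (n:ℝ) ^ ((1:ℝ)/128) = y^2 := by
      rw [hy, ← Real.rpow_natCast ((n:ℝ) ^ ((1:ℝ)/256)) 2, ← Real.rpow_mul (le_of_lt hn0)]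
      norm_num
    rw [hsq]
    nlinarith [hy1025, hLy]
  filter_upwards [p1, p2, p3, p4, p5] with n h1 h2 h3 h4 h5
  exact ⟨h1, h2, h3, h4, h5⟩


end Stmt14

theorem stmt14 :
    ∃ ε : ℝ, 0 < ε ∧ ∃ C : ℝ, 0 < C ∧ ∃ c : ℝ, 0 < c ∧ ∀ᶠ n : ℕ in Filter.atTop,
      ∀ x ≤ n, (n : ℝ) / 2 + Real.sqrt (n * Real.log n) ≤ x →
      ∀ (Ω : Type) [MeasurableSpace Ω], ∀ (μ : Measure Ω) (X : ℕ → Ω → ℕ),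
        IsMarkovChain μ (seqKernel n 3) x X →
        ENNReal.ofReal (1 - (n : ℝ) ^ (-c)) ≤
          μ {ω | ∃ t : ℕ, (t : ℝ) ≤ C * n * Real.log n ∧
                (1 + ε) * n / 2 < (X t ω : ℝ) ∧
                ∀ t' ≤ t, (n : ℝ) / 2 < (X t' ω : ℝ)} := by
  refine ⟨1/10, by norm_num, 524288, by norm_num, 1/128, by norm_num, ?_⟩
  filter_upwards [Stmt14.evfacts] with n hn
  obtain ⟨h1, h2, h3, h4, h5⟩ := hn
  intro x hxn hxl Ω inst μ X hX
  exact Stmt14.main n h1 h2 h3 h4 h5 x hxn hxl Ω μ X hX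
end
end

section
/- Fix a constant ε ∈ (0, 1/2). There exist constants C > 0 and c > 0 (depending only on ε) such that for all sufficiently large n the following holds for the sequential 3-Majority process. Let Y_t = n − X_t denote the number of agents with the minority opinion. If Y_0 ≤ n/2 − ε·n, then with probability at least 1 − n^{−c} there is a time t ≤ C·n·log n with Y_t = 0, and moreover Y_{t'} ≤ (1−ε)·n/2 for all t' ≤ t. -/
open MeasureTheory Finset
open scoped ENNReal NNReal

noncomputable section

namespace Stmt15Aux

lemma maj3_eq (n s : ℕ) : majProb n 3 s = 3*((s:ℝ)/n)^2 - 2*((s:ℝ)/n)^3 := by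
  have h : (Finset.Icc 2 3) = ({2, 3} : Finset ℕ) := by decide
  rw [majProb, if_neg (by decide : ¬ Even 3)]
  norm_num [binomTail, h, binomPMF]
  ring

lemma seqKernel_nonneg (n s u : ℕ) (hs : s ≤ n) : 0 ≤ seqKernel n 3 s u := by
  rcases Nat.eq_zero_or_pos n with hn | hn
  · subst hn
    interval_cases s
    simp only [seqKernel, maj3_eq]
    norm_num
    split_ifs <;> norm_num
  have hp0 : (0:ℝ) ≤ (s:ℝ)/n := by positivity
  have hp1 : (s:ℝ)/n ≤ 1 := by
    rw [div_le_one (by positivity)]; exact_mod_cast hs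
  have hns : ((n:ℝ)-s)/n = 1 - (s:ℝ)/n := by field_simp
  rw [seqKernel, maj3_eq, hns]
  set p := (s:ℝ)/n with hp
  split_ifs <;> nlinarith [sq_nonneg p, sq_nonneg (1-p), mul_nonneg hp0 (sub_nonneg.2 hp1),
    mul_nonneg (mul_nonneg hp0 hp0) (sub_nonneg.2 hp1),
    mul_nonneg (mul_nonneg (sub_nonneg.2 hp1) (sub_nonneg.2 hp1)) hp0]

lemma seqKernel_zero_of_far (n s u : ℕ) (h1 : u ≠ s+1) (h2 : u+1 ≠ s) (h3 : u ≠ s) :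
    seqKernel n 3 s u = 0 := by
  rw [seqKernel, if_neg h1, if_neg h2, if_neg h3]

lemma seqKernel_zero_of_top (n s u : ℕ) (hs : s ≤ n) (hu : n < u) : seqKernel n 3 s u = 0 := by
  rcases Nat.lt_trichotomy u (s+1) with h | h | h
  · omega
  · have hsn : s = n := by omega
    rw [seqKernel, if_pos h, hsn]
    simp
  · rw [seqKernel, if_neg (by omega), if_neg (by omega), if_neg (by omega)]

lemma seqKernel_sum (n s : ℕ) (hn : 0 < n) (h1 : 1 ≤ s) (hs : s < n) (g : ℕ → ℝ) :
    ∑ u ∈ Finset.range (n+1), seqKernel n 3 s u * g u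
      = (1 - (s:ℝ)/n) * majProb n 3 s * g (s+1)
        + ((s:ℝ)/n) * (1 - majProb n 3 s) * g (s-1)
        + (1 - (1 - (s:ℝ)/n) * majProb n 3 s - ((s:ℝ)/n) * (1 - majProb n 3 s)) * g s := by
  have hns : ((n:ℝ)-s)/n = 1 - (s:ℝ)/n := by field_simp
  have hsub : ({s-1, s, s+1} : Finset ℕ) ⊆ Finset.range (n+1) := by
    intro u hu
    simp only [Finset.mem_insert, Finset.mem_singleton] at hu
    simp only [Finset.mem_range]
    omega
  rw [← Finset.sum_subset hsub (by
    intro u _ hu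
    simp only [Finset.mem_insert, Finset.mem_singleton] at hu
    push_neg at hu
    rw [seqKernel_zero_of_far n s u (by omega) (by omega) (by omega), zero_mul])]
  have k1 : seqKernel n 3 s (s+1) = (1 - (s:ℝ)/n) * majProb n 3 s := by
    rw [seqKernel, if_pos rfl, hns]
  have k2 : seqKernel n 3 s (s-1) = ((s:ℝ)/n) * (1 - majProb n 3 s) := by
    rw [seqKernel, if_neg (by omega), if_pos (by omega)]
  have k3 : seqKernel n 3 s s = 1 - (1 - (s:ℝ)/n) * majProb n 3 s
      - ((s:ℝ)/n) * (1 - majProb n 3 s) := by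
    rw [seqKernel, if_neg (by omega), if_neg (by omega), if_pos rfl, hns]
  rw [Finset.sum_insert (by simp only [Finset.mem_insert, Finset.mem_singleton]; omega),
      Finset.sum_insert (by simp only [Finset.mem_singleton]; omega), Finset.sum_singleton,
      k1, k2, k3]
  ring

lemma state_drift (n s : ℕ) (ε : ℝ) (hε0 : 0 < ε) (hn : 0 < n) (h1 : 1 ≤ s) (hs : s < n)
    (hal : (1:ℝ)/2 + ε/2 ≤ (s:ℝ)/n) :
    ∑ u ∈ Finset.range (n+1), seqKernel n 3 s u * ((n:ℝ) - u)
      ≤ (1 - ε/(2*n)) * ((n:ℝ) - s) := by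
  rw [seqKernel_sum n s hn h1 hs, maj3_eq]
  have hcast : ((s-1 : ℕ) : ℝ) = (s:ℝ) - 1 := by
    have := Nat.cast_sub h1 (R := ℝ); simpa using this
  rw [hcast]
  push_cast
  set p := (s:ℝ)/n with hp
  have hps : (s:ℝ) = n * p := by
    rw [hp]; field_simp
  have hp1 : p < 1 := by
    rw [hp, div_lt_one (by positivity)]; exact_mod_cast hs
  have hkey2 : ε/2*(1-p) ≤ (3*p^2-2*p^3) - p := by
    have h5 : ε ≤ 2*p - 1 := by linarith
    have h6 : (1:ℝ)/2 ≤ p := by nlinarith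
    have h7 : ε/2 ≤ p*(2*p-1) := by nlinarith
    have h8 : ε/2 * (1-p) ≤ (p*(2*p-1))*(1-p) :=
      mul_le_mul_of_nonneg_right h7 (by linarith)
    nlinarith [h8]
  have hRHS : (1 - ε/(2*(n:ℝ)))*((n:ℝ) - (n:ℝ)*p) = (n:ℝ)*(1-p) - ε/2*(1-p) := by
    field_simp
  rw [hps, hRHS]
  nlinarith [hkey2]

/-- the constant `λ(ε)` -/
def lamFun (ε : ℝ) : ℝ :=
  (3*(1/2+ε/2) - 2*(1/2+ε/2)^2) / (1 + (1/2+ε/2) - 2*(1/2+ε/2)^2)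

lemma lamFun_ge (ε : ℝ) (hε0 : 0 < ε) (hε : ε < 1/2) : 1 + ε ≤ lamFun ε := by
  have hD : (0:ℝ) < 1 + (1/2+ε/2) - 2*(1/2+ε/2)^2 := by nlinarith
  rw [lamFun, le_div_iff₀ hD]
  have hD1 : 1 + (1/2+ε/2) - 2*(1/2+ε/2)^2 ≤ 1 := by nlinarith
  nlinarith [mul_le_mul_of_nonneg_left hD1 hε0.le]

lemma lamFun_gt_one (ε : ℝ) (hε0 : 0 < ε) (hε : ε < 1/2) : 1 < lamFun ε := by
  have := lamFun_ge ε hε0 hε; linarith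

lemma lam_step (ε p : ℝ) (hε0 : 0 < ε) (hε : ε < 1/2) (hp : 1/2 + ε/2 ≤ p) (hp1 : p ≤ 1) :
    lamFun ε * (p * (1 - (3*p^2-2*p^3))) ≤ (1-p) * (3*p^2-2*p^3) := by
  have hD : (0:ℝ) < 1 + (1/2+ε/2) - 2*(1/2+ε/2)^2 := by nlinarith
  rw [lamFun, div_mul_eq_mul_div, div_le_iff₀ hD]
  have hfac : 0 ≤ p * (1-p) * (p - (1/2+ε/2)) * (2 + (2*p-1)*(2*(1/2+ε/2)-1)) := by
    have h1 : (0:ℝ) ≤ p := by linarith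
    have h2 : (0:ℝ) ≤ 1 - p := by linarith
    have h3 : (0:ℝ) ≤ p - (1/2+ε/2) := by linarith
    have h4 : (0:ℝ) ≤ 2 + (2*p-1)*(2*(1/2+ε/2)-1) := by nlinarith
    positivity
  nlinarith [hfac]

lemma state_lam (n s : ℕ) (ε : ℝ) (hε0 : 0 < ε) (hε : ε < 1/2) (hn : 0 < n) (h1 : 1 ≤ s)
    (hs : s < n) (hal : (1:ℝ)/2 + ε/2 ≤ (s:ℝ)/n) :
    ∑ u ∈ Finset.range (n+1), seqKernel n 3 s u * (lamFun ε)^(n-u)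
      ≤ (lamFun ε)^(n-s) := by
  rw [seqKernel_sum n s hn h1 hs, maj3_eq]
  set L := lamFun ε with hL
  set p := (s:ℝ)/n with hp
  have hp1 : p ≤ 1 := by
    rw [hp, div_le_one (by positivity)]; exact_mod_cast hs.le
  have hp0 : (0:ℝ) ≤ p := by positivity
  have hL1 : 1 ≤ L := (lamFun_gt_one ε hε0 hε).le
  have hstep : L * (p * (1 - (3*p^2-2*p^3))) ≤ (1-p) * (3*p^2-2*p^3) :=
    lam_step ε p hε0 hε hal hp1
  obtain ⟨m, hm⟩ : ∃ m, n - s = m + 1 := ⟨n - s - 1, by omega⟩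
  have e1 : n - (s+1) = m := by omega
  have e2 : n - (s-1) = m + 2 := by omega
  rw [e1, e2, hm]
  have hy : (0:ℝ) ≤ L^m := by positivity
  have q2 : L^(m+2) = L^m * L * L := by ring
  have q1 : L^(m+1) = L^m * L := by ring
  rw [q1, q2]
  have h1p : (0:ℝ) ≤ 1 - p := by linarith
  have hA : (0:ℝ) ≤ (1-p) * (3*p^2-2*p^3) := by
    have : (0:ℝ) ≤ 3*p^2-2*p^3 := by
      nlinarith [mul_nonneg (mul_nonneg hp0 hp0) (by linarith : (0:ℝ) ≤ 3-2*p)]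
    exact mul_nonneg h1p this
  have hB : (0:ℝ) ≤ p * (1 - (3*p^2-2*p^3)) := by
    have : (0:ℝ) ≤ 1 - (3*p^2-2*p^3) := by
      nlinarith [mul_nonneg (mul_nonneg h1p h1p) (by linarith : (0:ℝ) ≤ 1+2*p)]
    exact mul_nonneg hp0 this
  nlinarith [mul_nonneg (mul_nonneg hy (sub_nonneg.2 hL1)) (sub_nonneg.2 hstep)]

section MeasurePart

variable {Ω : Type} [MeasurableSpace Ω] {μ : Measure Ω} {K : ℕ → ℕ → ℝ} {x : ℕ} {X : ℕ → Ω → ℕ}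

/-- extension of a finite path to `ℕ → ℕ` -/
def pth (t : ℕ) (v : Fin (t+1) → ℕ) : ℕ → ℕ :=
  fun i => if h : i ≤ t then v ⟨i, Nat.lt_succ_of_le h⟩ else 0

lemma meas_cyl (hX : ∀ t, Measurable (X t)) (t : ℕ) (p : ℕ → ℕ) :
    MeasurableSet {ω | ∀ i ≤ t, X i ω = p i} := by
  have h : {ω | ∀ i ≤ t, X i ω = p i} = ⋂ i ∈ Set.Iic t, (X i) ⁻¹' {p i} := by
    ext ω; simp [Set.mem_iInter]
  rw [h]
  exact MeasurableSet.biInter (Set.to_countable _)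
    (fun i _ => (hX i) (measurableSet_singleton _))

lemma meas_past (hX : ∀ t, Measurable (X t)) (t : ℕ) (Q : ℕ → ℕ → Prop) :
    MeasurableSet {ω | ∀ i ≤ t, Q i (X i ω)} := by
  have h : {ω | ∀ i ≤ t, Q i (X i ω)} = ⋂ i ∈ Set.Iic t, (X i) ⁻¹' {y | Q i y} := by
    ext ω; simp [Set.mem_iInter]
  rw [h]
  exact MeasurableSet.biInter (Set.to_countable _)
    (fun i _ => (hX i) (MeasurableSet.of_discrete))

lemma decomp (hX : ∀ t, Measurable (X t)) (t : ℕ) (A : Set Ω) (hA : MeasurableSet A) :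
    μ A = ∑' v : Fin (t+1) → ℕ, μ (A ∩ {ω | ∀ i ≤ t, X i ω = pth t v i}) := by
  have hcover : (⋃ v : Fin (t+1) → ℕ, {ω | ∀ i ≤ t, X i ω = pth t v i}) = Set.univ := by
    ext ω
    simp only [Set.mem_iUnion, Set.mem_univ, iff_true]
    refine ⟨fun j => X j ω, fun i hi => ?_⟩
    simp [pth, hi]
  have hdis : Pairwise (Function.onFun Disjoint
      (fun v : Fin (t+1) → ℕ => A ∩ {ω | ∀ i ≤ t, X i ω = pth t v i})) := by
    intro v w hvw
    refine Set.disjoint_left.2 fun ω hv hw => hvw ?_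
    funext i
    have h1 := hv.2 i (Nat.lt_succ_iff.mp i.isLt)
    have h2 := hw.2 i (Nat.lt_succ_iff.mp i.isLt)
    simp only [pth, dif_pos (Nat.lt_succ_iff.mp i.isLt), Fin.eta] at h1 h2
    rw [← h1, ← h2]
  calc μ A = μ (⋃ v : Fin (t+1) → ℕ, A ∩ {ω | ∀ i ≤ t, X i ω = pth t v i}) := by
        rw [← Set.inter_iUnion, hcover, Set.inter_univ]
    _ = _ := measure_iUnion hdis (fun v => hA.inter (meas_cyl hX t _))

lemma markov_past (hM : IsMarkovChain μ K x X) (Q : ℕ → ℕ → Prop) (t s u : ℕ) :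
    μ ({ω | X (t+1) ω = u} ∩ ({ω | ∀ i ≤ t, Q i (X i ω)} ∩ {ω | X t ω = s}))
      = ENNReal.ofReal (K s u) * μ ({ω | ∀ i ≤ t, Q i (X i ω)} ∩ {ω | X t ω = s}) := by
  obtain ⟨hprob, hX, hinit, hmar⟩ := hM
  set P : Set Ω := {ω | ∀ i ≤ t, Q i (X i ω)} ∩ {ω | X t ω = s} with hP
  have hPmeas : MeasurableSet P :=
    (meas_past hX t Q).inter ((hX t) (measurableSet_singleton s))
  have hA1meas : MeasurableSet ({ω | X (t+1) ω = u} ∩ P) :=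
    ((hX (t+1)) (measurableSet_singleton u)).inter hPmeas
  rw [decomp hX t _ hA1meas, decomp hX t P hPmeas, ← ENNReal.tsum_mul_left]
  congr 1
  funext v
  by_cases hv : (∀ i ≤ t, Q i (pth t v i)) ∧ pth t v t = s
  · have hsub : {ω | ∀ i ≤ t, X i ω = pth t v i} ⊆ P := by
      intro ω hω
      refine ⟨fun i hi => ?_, ?_⟩
      · rw [Set.mem_setOf_eq] at hω
        rw [hω i hi]; exact hv.1 i hi
      · show X t ω = s
        rw [hω t le_rfl]; exact hv.2
    have h1 : P ∩ {ω | ∀ i ≤ t, X i ω = pth t v i} = {ω | ∀ i ≤ t, X i ω = pth t v i} :=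
      Set.inter_eq_self_of_subset_right hsub
    have h2 : ({ω | X (t+1) ω = u} ∩ P) ∩ {ω | ∀ i ≤ t, X i ω = pth t v i}
        = {ω | X (t+1) ω = u} ∩ {ω | ∀ i ≤ t, X i ω = pth t v i} := by
      rw [Set.inter_assoc, h1]
    rw [h1, h2, hmar t (pth t v) u, hv.2]
  · have h0 : P ∩ {ω | ∀ i ≤ t, X i ω = pth t v i} = ∅ := by
      ext ω
      simp only [Set.mem_inter_iff, Set.mem_empty_iff_false, iff_false, not_and]
      intro hPω hcyl
      rw [Set.mem_setOf_eq] at hcyl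
      apply hv
      obtain ⟨hQ, hXt⟩ := hPω
      refine ⟨fun i hi => ?_, ?_⟩
      · rw [← hcyl i hi]; exact hQ i hi
      · rw [← hcyl t le_rfl]; exact hXt
    rw [Set.inter_assoc, h0, Set.inter_empty]
    simp

lemma split_state (hX : ∀ t, Measurable (X t)) (t N : ℕ) (C : Set Ω) (hC : MeasurableSet C)
    (hsub : ∀ ω ∈ C, X t ω < N) :
    μ C = ∑ s ∈ Finset.range N, μ (C ∩ {ω | X t ω = s}) := by
  have hcov : C = ⋃ s ∈ Finset.range N, C ∩ {ω | X t ω = s} := by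
    ext ω
    simp only [Set.mem_iUnion, Finset.mem_range, Set.mem_inter_iff, Set.mem_setOf_eq]
    constructor
    · intro hω; exact ⟨X t ω, hsub ω hω, hω, rfl⟩
    · rintro ⟨s, _, hω, _⟩; exact hω
  have hd : Set.PairwiseDisjoint (↑(Finset.range N))
      (fun s => C ∩ {ω | X t ω = s}) := by
    intro a _ b _ hab
    refine Set.disjoint_left.2 fun ω ha hb => hab ?_
    rw [← ha.2, ← hb.2]
  have hm : ∀ s ∈ Finset.range N, MeasurableSet (C ∩ {ω | X t ω = s}) :=
    fun s _ => hC.inter ((hX t) (measurableSet_singleton s))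
  have h := measure_biUnion_finset (μ := μ) hd hm
  rw [← hcov] at h
  exact h

lemma null_of_not_init (hM : IsMarkovChain μ K x X) (A : Set Ω)
    (hA : A ∩ {ω | X 0 ω = x} = ∅) : μ A = 0 := by
  obtain ⟨hprob, hX, hinit, -⟩ := hM
  have hm : MeasurableSet {ω | X 0 ω = x} := (hX 0) (measurableSet_singleton x)
  have hc : μ {ω | X 0 ω = x}ᶜ = 0 := by
    rw [measure_compl hm (measure_ne_top μ _), hinit, measure_univ, tsub_self]
  refine measure_mono_null ?_ hc
  intro ω hω
  simp only [Set.mem_compl_iff, Set.mem_setOf_eq]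
  intro h0
  exact Set.eq_empty_iff_forall_notMem.mp hA ω ⟨hω, h0⟩

end MeasurePart

section Chain

variable {Ω : Type} [MeasurableSpace Ω]

/-- alive (non-absorbed, below barrier) states -/
def alv (n B y : ℕ) : Prop := y < n ∧ n - y ≤ B

/-- the event that the chain has stayed alive up to time `t` -/
def AlvSet (X : ℕ → Ω → ℕ) (n B t : ℕ) : Set Ω := {ω | ∀ i ≤ t, alv n B (X i ω)}

/-- measure of being alive at time `t` in state `s` -/
def DD (μ : Measure Ω) (X : ℕ → Ω → ℕ) (n B t s : ℕ) : ℝ≥0∞ :=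
  μ (AlvSet X n B t ∩ {ω | X t ω = s})

/-- real version -/
def dd (μ : Measure Ω) (X : ℕ → Ω → ℕ) (n B t s : ℕ) : ℝ :=
  (DD μ X n B t s).toReal

variable {μ : Measure Ω} {X : ℕ → Ω → ℕ} {n B x : ℕ}

lemma dd_nonneg (t s : ℕ) : 0 ≤ dd μ X n B t s := ENNReal.toReal_nonneg

lemma DD_zero_of_not_alv (t s : ℕ) (h : ¬ alv n B s) : DD μ X n B t s = 0 := by
  have : AlvSet X n B t ∩ {ω | X t ω = s} = ∅ := by
    ext ω
    simp only [AlvSet, Set.mem_inter_iff, Set.mem_setOf_eq, Set.mem_empty_iff_false, iff_false,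
      not_and]
    intro hA hs
    exact h (hs ▸ hA t le_rfl)
  rw [DD, this, measure_empty]

lemma dd_zero_of_not_alv (t s : ℕ) (h : ¬ alv n B s) : dd μ X n B t s = 0 := by
  rw [dd, DD_zero_of_not_alv t s h, ENNReal.toReal_zero]

lemma step_eq (hM : IsMarkovChain μ (seqKernel n 3) x X) (t u : ℕ) :
    μ ({ω | X (t+1) ω = u} ∩ AlvSet X n B t)
      = ∑ s ∈ Finset.range n, ENNReal.ofReal (seqKernel n 3 s u) * DD μ X n B t s := by
  have hX := hM.2.1
  have hmeas : MeasurableSet ({ω | X (t+1) ω = u} ∩ AlvSet X n B t) :=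
    ((hX (t+1)) (measurableSet_singleton u)).inter (meas_past hX t _)
  have hsub : ∀ ω ∈ ({ω | X (t+1) ω = u} ∩ AlvSet X n B t), X t ω < n :=
    fun ω hω => (hω.2 t le_rfl).1
  rw [split_state hX t n _ hmeas hsub]
  refine Finset.sum_congr rfl fun s _ => ?_
  have harr : ({ω | X (t+1) ω = u} ∩ AlvSet X n B t) ∩ {ω | X t ω = s}
      = {ω | X (t+1) ω = u} ∩ (AlvSet X n B t ∩ {ω | X t ω = s}) := by
    rw [Set.inter_assoc]
  rw [harr]
  exact markov_past hM (fun _ y => alv n B y) t s u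

lemma DD_rec (hM : IsMarkovChain μ (seqKernel n 3) x X) (t u : ℕ) (hu : alv n B u) :
    DD μ X n B (t+1) u
      = ∑ s ∈ Finset.range n, ENNReal.ofReal (seqKernel n 3 s u) * DD μ X n B t s := by
  have hset : AlvSet X n B (t+1) ∩ {ω | X (t+1) ω = u}
      = {ω | X (t+1) ω = u} ∩ AlvSet X n B t := by
    ext ω
    simp only [AlvSet, Set.mem_inter_iff, Set.mem_setOf_eq]
    constructor
    · rintro ⟨hA, hu'⟩
      exact ⟨hu', fun i hi => hA i (Nat.le_succ_of_le hi)⟩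
    · rintro ⟨hu', hA⟩
      refine ⟨fun i hi => ?_, hu'⟩
      rcases Nat.lt_succ_iff_lt_or_eq.mp (Nat.lt_succ_of_le hi) with h | h
      · exact hA i (by omega)
      · rw [h, hu']; exact hu
  rw [DD, hset, step_eq hM t u]

lemma DD_le_one (hM : IsMarkovChain μ (seqKernel n 3) x X) (t s : ℕ) :
    DD μ X n B t s ≤ 1 := by
  haveI := hM.1
  exact (measure_mono (Set.subset_univ _)).trans (by simp)

lemma DD_eq_ofReal (hM : IsMarkovChain μ (seqKernel n 3) x X) (t s : ℕ) :
    DD μ X n B t s = ENNReal.ofReal (dd μ X n B t s) := by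
  rw [dd, ENNReal.ofReal_toReal]
  exact ne_top_of_le_ne_top ENNReal.one_ne_top (DD_le_one hM t s)

/-- expected value of `g` after one step from alive time-`t` mass -/
lemma mm_eq (hM : IsMarkovChain μ (seqKernel n 3) x X) (t u : ℕ) :
    μ ({ω | X (t+1) ω = u} ∩ AlvSet X n B t)
      = ENNReal.ofReal (∑ s ∈ Finset.range n, seqKernel n 3 s u * dd μ X n B t s) := by
  rw [step_eq hM t u, ENNReal.ofReal_sum_of_nonneg]
  · refine Finset.sum_congr rfl fun s hs => ?_
    rw [DD_eq_ofReal hM, ← ENNReal.ofReal_mul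
      (seqKernel_nonneg n s u (by simp only [Finset.mem_range] at hs; omega))]
  · intro s hs
    exact mul_nonneg (seqKernel_nonneg n s u (by
      simp only [Finset.mem_range] at hs; omega)) (dd_nonneg t s)

lemma dd_rec (hM : IsMarkovChain μ (seqKernel n 3) x X) (t u : ℕ) (hu : alv n B u) :
    dd μ X n B (t+1) u = ∑ s ∈ Finset.range n, seqKernel n 3 s u * dd μ X n B t s := by
  have h := DD_rec hM t u hu
  rw [DD_eq_ofReal hM] at h
  have hnn : 0 ≤ ∑ s ∈ Finset.range n, seqKernel n 3 s u * dd μ X n B t s := by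
    refine Finset.sum_nonneg fun s hs => mul_nonneg (seqKernel_nonneg n s u (by
      simp only [Finset.mem_range] at hs; omega)) (dd_nonneg t s)
  have h2 : ENNReal.ofReal (dd μ X n B (t+1) u)
      = ENNReal.ofReal (∑ s ∈ Finset.range n, seqKernel n 3 s u * dd μ X n B t s) := by
    rw [h, ENNReal.ofReal_sum_of_nonneg (fun s hs => mul_nonneg (seqKernel_nonneg n s u (by
      simp only [Finset.mem_range] at hs; omega)) (dd_nonneg t s))]
    refine Finset.sum_congr rfl fun s hs => ?_
    rw [DD_eq_ofReal hM, ← ENNReal.ofReal_mul (seqKernel_nonneg n s u (by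
      simp only [Finset.mem_range] at hs; omega))]
  have := congrArg ENNReal.toReal h2
  rwa [ENNReal.toReal_ofReal (dd_nonneg _ _), ENNReal.toReal_ofReal hnn] at this

/-- generic one-step bound for weighted sums -/
lemma weighted_rec (hM : IsMarkovChain μ (seqKernel n 3) x X) (t : ℕ) (g : ℕ → ℝ)
    (hg : ∀ u, 0 ≤ g u) :
    ∑ u ∈ Finset.range (n+1), g u * dd μ X n B (t+1) u
      ≤ ∑ s ∈ Finset.range n, dd μ X n B t s *
          (∑ u ∈ Finset.range (n+1), seqKernel n 3 s u * g u) := by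
  have hterm : ∀ u ∈ Finset.range (n+1), g u * dd μ X n B (t+1) u
      ≤ ∑ s ∈ Finset.range n, g u * (seqKernel n 3 s u * dd μ X n B t s) := by
    intro u hu
    by_cases halv : alv n B u
    · rw [dd_rec hM t u halv, Finset.mul_sum]
    · rw [dd_zero_of_not_alv _ _ halv, mul_zero]
      refine Finset.sum_nonneg fun s hs => mul_nonneg (hg u) (mul_nonneg
        (seqKernel_nonneg n s u (by simp only [Finset.mem_range] at hs; omega))
        (dd_nonneg t s))
  calc ∑ u ∈ Finset.range (n+1), g u * dd μ X n B (t+1) u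
      ≤ ∑ u ∈ Finset.range (n+1), ∑ s ∈ Finset.range n,
          g u * (seqKernel n 3 s u * dd μ X n B t s) := Finset.sum_le_sum hterm
    _ = ∑ s ∈ Finset.range n, dd μ X n B t s *
          (∑ u ∈ Finset.range (n+1), seqKernel n 3 s u * g u) := by
        rw [Finset.sum_comm]
        refine Finset.sum_congr rfl fun s _ => ?_
        rw [Finset.mul_sum]
        refine Finset.sum_congr rfl fun u _ => by ring

end Chain

section Chain2

variable {Ω : Type} [MeasurableSpace Ω]

instance (n B : ℕ) : DecidablePred (alv n B) := fun _ => by unfold alv; infer_instance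

/-- one-step mass arriving at `u` from alive states -/
def mmS (μ : Measure Ω) (X : ℕ → Ω → ℕ) (n B t u : ℕ) : ℝ :=
  ∑ s ∈ Finset.range n, seqKernel n 3 s u * dd μ X n B t s

/-- drift potential -/
def StS (μ : Measure Ω) (X : ℕ → Ω → ℕ) (n B t : ℕ) : ℝ :=
  ∑ s ∈ Finset.range (n+1), ((n:ℝ) - s) * dd μ X n B t s

/-- exponential potential -/
def LtS (μ : Measure Ω) (X : ℕ → Ω → ℕ) (n B : ℕ) (ε : ℝ) (t : ℕ) : ℝ :=
  ∑ s ∈ Finset.range (n+1), (lamFun ε)^(n - s) * dd μ X n B t s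

/-- broken states -/
def brkF (n B : ℕ) : Finset ℕ :=
  (Finset.range (n+1)).filter (fun u => u < n ∧ B < n - u)

/-- mass breaking the barrier at step `t+1` -/
def brS (μ : Measure Ω) (X : ℕ → Ω → ℕ) (n B t : ℕ) : ℝ :=
  ∑ u ∈ brkF n B, mmS μ X n B t u

variable {μ : Measure Ω} {X : ℕ → Ω → ℕ} {n B x : ℕ}

lemma mmS_nonneg (t u : ℕ) : 0 ≤ mmS μ X n B t u :=
  Finset.sum_nonneg fun s hs => mul_nonneg (seqKernel_nonneg n s u (by
    simp only [Finset.mem_range] at hs; omega)) (dd_nonneg t s)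

lemma brS_nonneg (t : ℕ) : 0 ≤ brS μ X n B t :=
  Finset.sum_nonneg fun u _ => mmS_nonneg t u

lemma StS_nonneg (t : ℕ) : 0 ≤ StS μ X n B t :=
  Finset.sum_nonneg fun s hs => mul_nonneg (by
    simp only [Finset.mem_range] at hs
    have : (s:ℝ) ≤ n := by exact_mod_cast Nat.lt_succ_iff.mp hs
    linarith) (dd_nonneg t s)

lemma LtS_nonneg (ε : ℝ) (hε0 : 0 < ε) (hε : ε < 1/2) (t : ℕ) : 0 ≤ LtS μ X n B ε t :=
  Finset.sum_nonneg fun s _ => mul_nonneg (pow_nonneg (by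
    have := lamFun_gt_one ε hε0 hε; linarith) _) (dd_nonneg t s)

lemma dd_succ_filter (hM : IsMarkovChain μ (seqKernel n 3) x X) (t : ℕ) (g : ℕ → ℝ) :
    ∑ u ∈ Finset.range (n+1), g u * dd μ X n B (t+1) u
      = ∑ u ∈ (Finset.range (n+1)).filter (alv n B), g u * mmS μ X n B t u := by
  rw [← Finset.sum_filter_add_sum_filter_not (Finset.range (n+1)) (alv n B)
    (fun u => g u * dd μ X n B (t+1) u)]
  have h2 : ∑ u ∈ (Finset.range (n+1)).filter (fun u => ¬ alv n B u),
      g u * dd μ X n B (t+1) u = 0 := by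
    refine Finset.sum_eq_zero fun u hu => ?_
    simp only [Finset.mem_filter] at hu
    rw [dd_zero_of_not_alv _ _ hu.2, mul_zero]
  rw [h2, add_zero]
  refine Finset.sum_congr rfl fun u hu => ?_
  simp only [Finset.mem_filter] at hu
  rw [dd_rec hM t u hu.2]
  rfl

lemma fubini_mm (t : ℕ) (g : ℕ → ℝ) :
    ∑ u ∈ Finset.range (n+1), g u * mmS μ X n B t u
      = ∑ s ∈ Finset.range n, dd μ X n B t s *
          (∑ u ∈ Finset.range (n+1), seqKernel n 3 s u * g u) := by
  simp only [mmS, Finset.mul_sum, Finset.sum_mul]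
  rw [Finset.sum_comm]
  refine Finset.sum_congr rfl fun s _ => Finset.sum_congr rfl fun u _ => by ring

lemma filter_le_range_sum (F : Finset ℕ) (hF : F ⊆ Finset.range (n+1)) (g : ℕ → ℝ)
    (hg : ∀ u, u ∈ Finset.range (n+1) → 0 ≤ g u) (t : ℕ) :
    ∑ u ∈ F, g u * mmS μ X n B t u ≤ ∑ u ∈ Finset.range (n+1), g u * mmS μ X n B t u :=
  Finset.sum_le_sum_of_subset_of_nonneg hF fun u hu _ =>
    mul_nonneg (hg u hu) (mmS_nonneg t u)

/-- master per-state bound application -/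
lemma sum_state_bound (ε : ℝ) (hε0 : 0 < ε) (hn : 0 < n) (hB : (B:ℝ) ≤ (1-ε)*n/2)
    (t : ℕ) (g : ℕ → ℝ) (ρ : ℕ → ℝ)
    (hst : ∀ s, 1 ≤ s → s < n → (1:ℝ)/2 + ε/2 ≤ (s:ℝ)/n →
      ∑ u ∈ Finset.range (n+1), seqKernel n 3 s u * g u ≤ ρ s) :
    ∑ s ∈ Finset.range n, dd μ X n B t s *
        (∑ u ∈ Finset.range (n+1), seqKernel n 3 s u * g u)
      ≤ ∑ s ∈ Finset.range n, dd μ X n B t s * ρ s := by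
  refine Finset.sum_le_sum fun s hs => ?_
  by_cases halv : alv n B s
  · obtain ⟨hs1, hslt⟩ := halv
    have hcast : ((n - s : ℕ) : ℝ) = (n:ℝ) - s := by
      have := Nat.cast_sub hs1.le (R := ℝ); simpa using this
    have hsn : (n:ℝ) - s ≤ (1-ε)*n/2 := by
      rw [← hcast]
      exact le_trans (by exact_mod_cast hslt) hB
    have hs1' : (1:ℝ)/2 + ε/2 ≤ (s:ℝ)/n := by
      rw [le_div_iff₀ (by positivity : (0:ℝ) < n)]
      nlinarith
    have hspos : 1 ≤ s := by
      by_contra hc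
      push_neg at hc
      interval_cases s
      simp only [Nat.cast_zero, zero_div] at hs1'
      nlinarith
    exact mul_le_mul_of_nonneg_left (hst s hspos hs1 hs1') (dd_nonneg t s)
  · rw [dd_zero_of_not_alv _ _ halv, zero_mul, zero_mul]

lemma St_rec (hM : IsMarkovChain μ (seqKernel n 3) x X) (ε : ℝ) (hε0 : 0 < ε)
    (hn : 0 < n) (hB : (B:ℝ) ≤ (1-ε)*n/2) (t : ℕ) :
    StS μ X n B (t+1) ≤ (1 - ε/(2*n)) * StS μ X n B t := by
  have hg : ∀ u, u ∈ Finset.range (n+1) → 0 ≤ (n:ℝ) - u := by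
    intro u hu
    simp only [Finset.mem_range] at hu
    have : (u:ℝ) ≤ n := by exact_mod_cast Nat.lt_succ_iff.mp hu
    linarith
  have h1 : StS μ X n B (t+1)
      ≤ ∑ u ∈ Finset.range (n+1), ((n:ℝ) - u) * mmS μ X n B t u := by
    rw [StS, dd_succ_filter hM t _]
    exact filter_le_range_sum _ (Finset.filter_subset _ _) _ hg t
  have h2 := fubini_mm (μ := μ) (X := X) (n := n) (B := B) t (fun u => (n:ℝ) - u)
  have h3 := sum_state_bound (μ := μ) (X := X) ε hε0 hn hB t (fun u => (n:ℝ) - u)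
    (fun s => (1 - ε/(2*n)) * ((n:ℝ) - s))
    (fun s h1s hsn hal => state_drift n s ε hε0 hn h1s hsn hal)
  have h4 : ∑ s ∈ Finset.range n, dd μ X n B t s * ((1 - ε/(2*n)) * ((n:ℝ) - s))
      = (1 - ε/(2*n)) * ∑ s ∈ Finset.range n, ((n:ℝ) - s) * dd μ X n B t s := by
    rw [Finset.mul_sum]
    exact Finset.sum_congr rfl fun s _ => by ring
  have h5 : StS μ X n B t = ∑ s ∈ Finset.range n, ((n:ℝ) - s) * dd μ X n B t s := by
    rw [StS, Finset.sum_range_succ]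
    simp
  calc StS μ X n B (t+1)
      ≤ ∑ u ∈ Finset.range (n+1), ((n:ℝ) - u) * mmS μ X n B t u := h1
    _ = ∑ s ∈ Finset.range n, dd μ X n B t s *
          (∑ u ∈ Finset.range (n+1), seqKernel n 3 s u * ((n:ℝ) - u)) := h2
    _ ≤ ∑ s ∈ Finset.range n, dd μ X n B t s * ((1 - ε/(2*n)) * ((n:ℝ) - s)) := h3
    _ = (1 - ε/(2*n)) * ∑ s ∈ Finset.range n, ((n:ℝ) - s) * dd μ X n B t s := h4
    _ = (1 - ε/(2*n)) * StS μ X n B t := by rw [← h5]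

lemma St_iter (hM : IsMarkovChain μ (seqKernel n 3) x X) (ε : ℝ) (hε0 : 0 < ε)
    (hn : 0 < n) (hB : (B:ℝ) ≤ (1-ε)*n/2) (hδ : 0 ≤ 1 - ε/(2*n)) (T : ℕ) :
    StS μ X n B T ≤ (1 - ε/(2*n))^T * StS μ X n B 0 := by
  induction T with
  | zero => simp
  | succ T ih =>
    calc StS μ X n B (T+1) ≤ (1 - ε/(2*n)) * StS μ X n B T := St_rec hM ε hε0 hn hB T
      _ ≤ (1 - ε/(2*n)) * ((1 - ε/(2*n))^T * StS μ X n B 0) :=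
          mul_le_mul_of_nonneg_left ih hδ
      _ = (1 - ε/(2*n))^(T+1) * StS μ X n B 0 := by ring

lemma Lt_rec (hM : IsMarkovChain μ (seqKernel n 3) x X) (ε : ℝ) (hε0 : 0 < ε) (hε : ε < 1/2)
    (hn : 0 < n) (hB : (B:ℝ) ≤ (1-ε)*n/2) (t : ℕ) :
    LtS μ X n B ε (t+1) + (lamFun ε)^(B+1) * brS μ X n B t ≤ LtS μ X n B ε t := by
  have hlam1 : 1 ≤ lamFun ε := (lamFun_gt_one ε hε0 hε).le
  have hlam0 : (0:ℝ) ≤ lamFun ε := by linarith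
  have hg : ∀ u, u ∈ Finset.range (n+1) → 0 ≤ (lamFun ε)^(n-u) :=
    fun u _ => pow_nonneg hlam0 _
  have hA : LtS μ X n B ε (t+1)
      = ∑ u ∈ (Finset.range (n+1)).filter (alv n B), (lamFun ε)^(n-u) * mmS μ X n B t u :=
    dd_succ_filter hM t _
  have hbr : (lamFun ε)^(B+1) * brS μ X n B t
      ≤ ∑ u ∈ brkF n B, (lamFun ε)^(n-u) * mmS μ X n B t u := by
    rw [brS, Finset.mul_sum]
    refine Finset.sum_le_sum fun u hu => ?_
    have hmem : u < n ∧ B < n - u := by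
      have := hu
      simp only [brkF, Finset.mem_filter] at this
      exact this.2
    have hple : (lamFun ε)^(B+1) ≤ (lamFun ε)^(n-u) :=
      pow_le_pow_right₀ hlam1 (by omega)
    exact mul_le_mul_of_nonneg_right hple (mmS_nonneg t u)
  have hdisj : Disjoint ((Finset.range (n+1)).filter (alv n B)) (brkF n B) := by
    rw [Finset.disjoint_left]
    intro u h1 h2
    simp only [Finset.mem_filter] at h1
    simp only [brkF, Finset.mem_filter] at h2
    obtain ⟨-, ha⟩ := h1
    obtain ⟨-, -, hb⟩ := h2
    exact absurd ha.2 (by omega)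
  have hsub2 : ((Finset.range (n+1)).filter (alv n B)) ∪ brkF n B ⊆ Finset.range (n+1) :=
    Finset.union_subset (Finset.filter_subset _ _) (Finset.filter_subset _ _)
  have hle2 : ∑ u ∈ ((Finset.range (n+1)).filter (alv n B)) ∪ brkF n B,
        (lamFun ε)^(n-u) * mmS μ X n B t u
      ≤ ∑ u ∈ Finset.range (n+1), (lamFun ε)^(n-u) * mmS μ X n B t u :=
    filter_le_range_sum _ hsub2 _ hg t
  have hfub := fubini_mm (μ := μ) (X := X) (n := n) (B := B) t (fun u => (lamFun ε)^(n-u))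
  have hps := sum_state_bound (μ := μ) (X := X) ε hε0 hn hB t (fun u => (lamFun ε)^(n-u))
    (fun s => (lamFun ε)^(n-s))
    (fun s h1s hsn hal => state_lam n s ε hε0 hε hn h1s hsn hal)
  have hfin : ∑ s ∈ Finset.range n, dd μ X n B t s * (lamFun ε)^(n-s)
      ≤ LtS μ X n B ε t := by
    rw [LtS, Finset.sum_range_succ]
    have : ∑ s ∈ Finset.range n, dd μ X n B t s * (lamFun ε)^(n-s)
        = ∑ s ∈ Finset.range n, (lamFun ε)^(n-s) * dd μ X n B t s :=
      Finset.sum_congr rfl fun s _ => by ring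
    rw [this]
    have hnn : 0 ≤ (lamFun ε)^(n-n) * dd μ X n B t n :=
      mul_nonneg (pow_nonneg hlam0 _) (dd_nonneg t n)
    linarith
  calc LtS μ X n B ε (t+1) + (lamFun ε)^(B+1) * brS μ X n B t
      ≤ (∑ u ∈ (Finset.range (n+1)).filter (alv n B), (lamFun ε)^(n-u) * mmS μ X n B t u)
        + ∑ u ∈ brkF n B, (lamFun ε)^(n-u) * mmS μ X n B t u := add_le_add (le_of_eq hA) hbr
    _ = ∑ u ∈ ((Finset.range (n+1)).filter (alv n B)) ∪ brkF n B,
          (lamFun ε)^(n-u) * mmS μ X n B t u := (Finset.sum_union hdisj).symm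
    _ ≤ ∑ u ∈ Finset.range (n+1), (lamFun ε)^(n-u) * mmS μ X n B t u := hle2
    _ = ∑ s ∈ Finset.range n, dd μ X n B t s *
          (∑ u ∈ Finset.range (n+1), seqKernel n 3 s u * (lamFun ε)^(n-u)) := hfub
    _ ≤ ∑ s ∈ Finset.range n, dd μ X n B t s * (lamFun ε)^(n-s) := hps
    _ ≤ LtS μ X n B ε t := hfin

lemma Lt_iter (hM : IsMarkovChain μ (seqKernel n 3) x X) (ε : ℝ) (hε0 : 0 < ε) (hε : ε < 1/2)
    (hn : 0 < n) (hB : (B:ℝ) ≤ (1-ε)*n/2) (T : ℕ) :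
    (lamFun ε)^(B+1) * (∑ t ∈ Finset.range T, brS μ X n B t)
      ≤ LtS μ X n B ε 0 - LtS μ X n B ε T := by
  induction T with
  | zero => simp
  | succ T ih =>
    rw [Finset.sum_range_succ, mul_add]
    have h := Lt_rec hM ε hε0 hε hn hB T
    linarith

end Chain2

section Chain3

variable {Ω : Type} [MeasurableSpace Ω] {μ : Measure Ω} {X : ℕ → Ω → ℕ} {n B x : ℕ}

lemma stay_le_n (hM : IsMarkovChain μ (seqKernel n 3) x X) (hx : x ≤ n) (t : ℕ) :
    μ {ω | ∀ i ≤ t, X i ω ≤ n} = 1 := by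
  haveI := hM.1
  have hX := hM.2.1
  induction t with
  | zero =>
    refine le_antisymm prob_le_one ?_
    rw [← hM.2.2.1]
    refine measure_mono fun ω hω => ?_
    intro i hi
    have h0 : i = 0 := Nat.le_zero.mp hi
    subst h0
    rw [Set.mem_setOf_eq] at hω
    rw [hω]; exact hx
  | succ t ih =>
    have hPm : MeasurableSet {ω | ∀ i ≤ t, X i ω ≤ n} := meas_past hX t (fun _ y => y ≤ n)
    have hQm : MeasurableSet {ω | X (t+1) ω ≤ n} := by
      have hpre : {ω | X (t+1) ω ≤ n} = X (t+1) ⁻¹' {y | y ≤ n} := rfl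
      rw [hpre]; exact (hX (t+1)) MeasurableSet.of_discrete
    have hset : {ω | ∀ i ≤ t+1, X i ω ≤ n}
        = {ω | ∀ i ≤ t, X i ω ≤ n} ∩ {ω | X (t+1) ω ≤ n} := by
      ext ω
      simp only [Set.mem_inter_iff, Set.mem_setOf_eq]
      constructor
      · intro h; exact ⟨fun i hi => h i (by omega), h (t+1) le_rfl⟩
      · rintro ⟨h1, h2⟩ i hi
        rcases Nat.lt_succ_iff_lt_or_eq.mp (Nat.lt_succ_of_le hi) with h | h
        · exact h1 i (by omega)
        · rw [h]; exact h2
    have hzero : μ ({ω | ∀ i ≤ t, X i ω ≤ n} \ {ω | X (t+1) ω ≤ n}) = 0 := by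
      have hcup : {ω | ∀ i ≤ t, X i ω ≤ n} \ {ω | X (t+1) ω ≤ n}
          = ⋃ j : ℕ, ({ω | X (t+1) ω = (n+1+j)} ∩ {ω | ∀ i ≤ t, X i ω ≤ n}) := by
        ext ω
        simp only [Set.mem_diff, Set.mem_setOf_eq, Set.mem_iUnion, Set.mem_inter_iff]
        constructor
        · rintro ⟨h1, h2⟩
          exact ⟨X (t+1) ω - (n+1), by omega, h1⟩
        · rintro ⟨j, hj, h1⟩
          exact ⟨h1, by omega⟩
      rw [hcup]
      refine measure_iUnion_null fun j => ?_
      have hmeas : MeasurableSet ({ω | X (t+1) ω = (n+1+j)} ∩ {ω | ∀ i ≤ t, X i ω ≤ n}) :=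
        ((hX (t+1)) (measurableSet_singleton _)).inter hPm
      have hsub : ∀ ω ∈ ({ω | X (t+1) ω = (n+1+j)} ∩ {ω | ∀ i ≤ t, X i ω ≤ n}),
          X t ω < n+1 := fun ω hω => Nat.lt_succ_of_le (hω.2 t le_rfl)
      rw [split_state hX t (n+1) _ hmeas hsub]
      refine Finset.sum_eq_zero fun s hs => ?_
      rw [Set.inter_assoc, markov_past hM (fun _ y => y ≤ n) t s (n+1+j),
        seqKernel_zero_of_top n s (n+1+j) (by simp only [Finset.mem_range] at hs; omega)
          (by omega)]
      simp
    have h1 : μ {ω | ∀ i ≤ t+1, X i ω ≤ n} = μ {ω | ∀ i ≤ t, X i ω ≤ n} := by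
      rw [hset]
      have h2 := measure_inter_add_diff (μ := μ) {ω | ∀ i ≤ t, X i ω ≤ n} hQm
      rw [hzero, add_zero] at h2
      exact h2
    rw [h1, ih]

lemma dd_init_eq_one (hM : IsMarkovChain μ (seqKernel n 3) x X) (hax : alv n B x) :
    dd μ X n B 0 x = 1 := by
  have hset : AlvSet X n B 0 ∩ {ω | X 0 ω = x} = {ω | X 0 ω = x} := by
    ext ω
    simp only [AlvSet, Set.mem_inter_iff, Set.mem_setOf_eq]
    constructor
    · rintro ⟨-, h⟩; exact h
    · intro h
      refine ⟨fun i hi => ?_, h⟩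
      have h0 : i = 0 := Nat.le_zero.mp hi
      subst h0; rw [h]; exact hax
  rw [dd, DD, hset, hM.2.2.1, ENNReal.toReal_one]

lemma dd_init_ne (hM : IsMarkovChain μ (seqKernel n 3) x X) (s : ℕ) (hs : s ≠ x) :
    dd μ X n B 0 s = 0 := by
  rw [dd, DD, null_of_not_init hM _ ?_, ENNReal.toReal_zero]
  ext ω
  simp only [AlvSet, Set.mem_inter_iff, Set.mem_setOf_eq, Set.mem_empty_iff_false, iff_false,
    not_and]
  rintro ⟨-, h1⟩ h2
  exact hs (h1 ▸ h2 ▸ rfl)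

lemma StS_init (hM : IsMarkovChain μ (seqKernel n 3) x X) (hx : x < n) (hax : alv n B x) :
    StS μ X n B 0 = (n:ℝ) - x := by
  rw [StS, Finset.sum_eq_single x]
  · rw [dd_init_eq_one hM hax, mul_one]
  · intro s _ hs; rw [dd_init_ne hM s hs, mul_zero]
  · intro hx'
    exact absurd (Finset.mem_range.mpr (by omega)) hx'

lemma LtS_init (hM : IsMarkovChain μ (seqKernel n 3) x X) (ε : ℝ) (hx : x < n)
    (hax : alv n B x) : LtS μ X n B ε 0 = (lamFun ε)^(n-x) := by
  rw [LtS, Finset.sum_eq_single x]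
  · rw [dd_init_eq_one hM hax, mul_one]
  · intro s _ hs; rw [dd_init_ne hM s hs, mul_zero]
  · intro hx'
    exact absurd (Finset.mem_range.mpr (by omega)) hx'

lemma alive_T_le (hM : IsMarkovChain μ (seqKernel n 3) x X) (hn : 0 < n) (T : ℕ) :
    μ (AlvSet X n B T) ≤ ENNReal.ofReal (StS μ X n B T) := by
  have hX := hM.2.1
  rw [split_state hX T n (AlvSet X n B T) (meas_past hX T (fun _ y => alv n B y))
    (fun ω hω => (hω T le_rfl).1)]
  have heq : ∀ s ∈ Finset.range n,
      μ (AlvSet X n B T ∩ {ω | X T ω = s}) = ENNReal.ofReal (dd μ X n B T s) :=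
    fun s _ => DD_eq_ofReal hM T s
  rw [Finset.sum_congr rfl heq,
    ← ENNReal.ofReal_sum_of_nonneg (fun s _ => dd_nonneg T s)]
  refine ENNReal.ofReal_le_ofReal ?_
  have h1 : ∑ s ∈ Finset.range n, dd μ X n B T s
      ≤ ∑ s ∈ Finset.range n, ((n:ℝ) - s) * dd μ X n B T s := by
    refine Finset.sum_le_sum fun s hs => ?_
    simp only [Finset.mem_range] at hs
    have : (1:ℝ) ≤ (n:ℝ) - s := by
      have : (s:ℝ) + 1 ≤ n := by exact_mod_cast hs
      linarith
    exact le_mul_of_one_le_left (dd_nonneg T s) this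
  have h2 : StS μ X n B T = ∑ s ∈ Finset.range n, ((n:ℝ) - s) * dd μ X n B T s := by
    rw [StS, Finset.sum_range_succ]
    simp
  linarith

lemma brk_event_le (hM : IsMarkovChain μ (seqKernel n 3) x X) (t : ℕ) :
    μ (AlvSet X n B t ∩ {ω | X (t+1) ω < n ∧ B < n - X (t+1) ω})
      ≤ ENNReal.ofReal (brS μ X n B t) := by
  have hcov : AlvSet X n B t ∩ {ω | X (t+1) ω < n ∧ B < n - X (t+1) ω}
      ⊆ ⋃ u ∈ brkF n B, ({ω | X (t+1) ω = u} ∩ AlvSet X n B t) := by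
    intro ω hω
    simp only [Set.mem_iUnion, Set.mem_inter_iff, Set.mem_setOf_eq]
    refine ⟨X (t+1) ω, ?_, rfl, hω.1⟩
    simp only [brkF, Finset.mem_filter, Finset.mem_range]
    have h2 := hω.2.1
    exact ⟨by omega, hω.2⟩
  refine le_trans (measure_mono hcov) (le_trans (measure_biUnion_finset_le _ _) ?_)
  have heq : ∀ u ∈ brkF n B,
      μ ({ω | X (t+1) ω = u} ∩ AlvSet X n B t) = ENNReal.ofReal (mmS μ X n B t u) :=
    fun u _ => mm_eq hM t u
  rw [Finset.sum_congr rfl heq, ← ENNReal.ofReal_sum_of_nonneg (fun u _ => mmS_nonneg t u)]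
  exact le_rfl

/-- barrier-break event at time `t` -/
def BrkEv (X : ℕ → Ω → ℕ) (n B t : ℕ) : Set Ω :=
  {ω | (∀ i < t, alv n B (X i ω)) ∧ (X t ω < n ∧ B < n - X t ω)}

lemma BrkEv_succ (t : ℕ) : BrkEv X n B (t+1)
    = AlvSet X n B t ∩ {ω | X (t+1) ω < n ∧ B < n - X (t+1) ω} := by
  ext ω
  simp only [BrkEv, AlvSet, Set.mem_inter_iff, Set.mem_setOf_eq]
  constructor
  · rintro ⟨h1, h2⟩
    exact ⟨fun i hi => h1 i (by omega), h2⟩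
  · rintro ⟨h1, h2⟩
    exact ⟨fun i hi => h1 i (by omega), h2⟩

lemma BrkEv_zero_null (hM : IsMarkovChain μ (seqKernel n 3) x X) (hax : alv n B x) :
    μ (BrkEv X n B 0) = 0 := by
  refine null_of_not_init hM _ ?_
  ext ω
  simp only [BrkEv, Set.mem_inter_iff, Set.mem_setOf_eq, Set.mem_empty_iff_false, iff_false,
    not_and]
  rintro ⟨-, h2⟩ h3
  rw [h3] at h2
  exact absurd hax.2 (by omega)

/-- the universal cover -/
lemma univ_cover (T : ℕ) :
    (Set.univ : Set Ω) ⊆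
      {ω | ∃ t ≤ T, X t ω = n ∧ ∀ i < t, alv n B (X i ω)}
      ∪ AlvSet X n B T
      ∪ (⋃ t ∈ Finset.range (T+1), BrkEv X n B t)
      ∪ {ω | ∃ i ≤ T, n < X i ω} := by
  intro ω _
  by_cases hexc : ∃ i ≤ T, n < X i ω
  · exact Or.inr hexc
  push_neg at hexc
  by_cases hall : ∀ i ≤ T, alv n B (X i ω)
  · exact Or.inl (Or.inl (Or.inr hall))
  · push_neg at hall
    obtain ⟨i₀, hi₀, hni₀⟩ := hall
    have hex : ∃ t, t ≤ T ∧ ¬ alv n B (X t ω) := ⟨i₀, hi₀, hni₀⟩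
    classical
    obtain ⟨t, ⟨⟨htT, htn⟩, hmin'⟩⟩ :
        ∃ t, (t ≤ T ∧ ¬ alv n B (X t ω)) ∧ ∀ i < t, ¬(i ≤ T ∧ ¬ alv n B (X i ω)) :=
      ⟨Nat.find hex, Nat.find_spec hex, fun i hi => Nat.find_min hex hi⟩
    have hmin : ∀ i < t, alv n B (X i ω) := by
      intro i hi
      by_contra hc
      exact hmin' i hi ⟨le_trans (le_of_lt hi) htT, hc⟩
    have hXle : X t ω ≤ n := hexc _ htT
    rcases Nat.lt_or_ge (X t ω) n with hlt | hge
    · refine Or.inl (Or.inr ?_)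
      simp only [Set.mem_iUnion, Finset.mem_range]
      refine ⟨t, by omega, hmin, hlt, ?_⟩
      simp only [alv, not_and, not_le] at htn
      exact htn hlt
    · have hXn : X t ω = n := le_antisymm hXle hge
      exact Or.inl (Or.inl (Or.inl ⟨t, htT, hXn, hmin⟩))

end Chain3

lemma sq_div_four_le_exp (y : ℝ) (hy : 0 ≤ y) : y^2/4 ≤ Real.exp y := by
  have h1 : Real.exp y = Real.exp (y/2) * Real.exp (y/2) := by
    rw [← Real.exp_add]; ring_nf
  have h2 : y/2 ≤ Real.exp (y/2) := by
    have := Real.add_one_le_exp (y/2); linarith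
  have h3 : 0 ≤ y/2 := by linarith
  nlinarith [h2, h3]

end Stmt15Aux

open Stmt15Aux in
set_option maxHeartbeats 3000000 in
theorem stmt15 (ε : ℝ) (hε0 : 0 < ε) (hε : ε < 1 / 2) :
    ∃ C : ℝ, 0 < C ∧ ∃ c : ℝ, 0 < c ∧ ∀ᶠ n : ℕ in Filter.atTop,
      ∀ x ≤ n, (n : ℝ) - x ≤ (n : ℝ) / 2 - ε * n →
      ∀ (Ω : Type) [MeasurableSpace Ω], ∀ (μ : Measure Ω) (X : ℕ → Ω → ℕ),
        IsMarkovChain μ (seqKernel n 3) x X →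
        ENNReal.ofReal (1 - (n : ℝ) ^ (-c)) ≤
          μ {ω | ∃ t : ℕ, (t : ℝ) ≤ C * n * Real.log n ∧ X t ω = n ∧
                ∀ t' ≤ t, (n : ℝ) - (X t' ω : ℝ) ≤ (1 - ε) * n / 2} := by
  have hlg : 0 < Real.log (1+ε) := Real.log_pos (by linarith)
  set a : ℝ := ε/2 * Real.log (1+ε) with ha
  have ha0 : 0 < a := by positivity
  refine ⟨8/ε, by positivity, 1, one_pos, ?_⟩
  rw [Filter.eventually_atTop]
  refine ⟨max 3 (max (⌈8/a^2⌉₊ + 1) (⌈2/ε⌉₊ + 1)), fun n hn => ?_⟩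
  have hn3 : 3 ≤ n := le_trans (le_max_left _ _) hn
  have hn0 : 0 < n := by omega
  have hnR : (3:ℝ) ≤ n := by exact_mod_cast hn3
  have hnR0 : (0:ℝ) < n := by linarith
  have hna : 8/a^2 ≤ (n:ℝ) := by
    have h1 : ⌈8/a^2⌉₊ + 1 ≤ n :=
      le_trans (le_trans (le_max_left _ _) (le_max_right _ _)) hn
    have h2 := Nat.le_ceil (8/a^2)
    have h3 : ((⌈8/a^2⌉₊ + 1 : ℕ) : ℝ) ≤ n := by exact_mod_cast h1
    push_cast at h3
    linarith
  have hεn : 2 ≤ ε * n := by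
    have h1 : ⌈2/ε⌉₊ + 1 ≤ n :=
      le_trans (le_trans (le_max_right _ _) (le_max_right _ _)) hn
    have h2 := Nat.le_ceil (2/ε)
    have h3 : ((⌈2/ε⌉₊ + 1 : ℕ) : ℝ) ≤ n := by exact_mod_cast h1
    push_cast at h3
    have h4 : 2/ε ≤ (n:ℝ) := by linarith
    rw [div_le_iff₀ hε0] at h4
    linarith [h4]
  intro x hxn hxhalf Ω _ μ X hM
  haveI hPM := hM.1
  have hrp : ((n:ℝ)) ^ (-(1:ℝ)) = ((n:ℝ))⁻¹ := by
    rw [Real.rpow_neg (by positivity), Real.rpow_one]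
  rw [hrp]
  have hlogn : (0:ℝ) ≤ Real.log n := Real.log_nonneg (by exact_mod_cast hn0)
  have hinvn : (0:ℝ) ≤ 1 - (n:ℝ)⁻¹ := by
    have h1 : (n:ℝ)⁻¹ ≤ 1 := by
      rw [inv_le_one_iff₀]; right; linarith
    linarith
  by_cases hxeqn : x = n
  · calc ENNReal.ofReal (1 - (n:ℝ)⁻¹) ≤ 1 := ENNReal.ofReal_le_one.mpr (by
          have : (0:ℝ) ≤ (n:ℝ)⁻¹ := by positivity
          linarith)
      _ = μ {ω | X 0 ω = x} := hM.2.2.1.symm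
      _ ≤ _ := by
          refine measure_mono fun ω hω => ?_
          rw [Set.mem_setOf_eq] at hω
          rw [hxeqn] at hω
          refine ⟨0, ?_, hω, fun t' ht' => ?_⟩
          · push_cast
            have h8ε : (0:ℝ) ≤ 8/ε := by positivity
            have := mul_nonneg (mul_nonneg h8ε hnR0.le) hlogn
            linarith
          · have h0 : t' = 0 := Nat.le_zero.mp ht'
            subst h0
            rw [hω]
            have h9 : (0:ℝ) ≤ (1-ε)*n/2 := by nlinarith
            simp only [sub_self]
            linarith
  have hxlt : x < n := by omega
  obtain ⟨B, hBle, hBgt⟩ : ∃ B : ℕ, (B:ℝ) ≤ (1-ε)*n/2 ∧ (1-ε)*n/2 - 1 ≤ (B:ℝ) := by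
    refine ⟨Nat.floor ((1-ε)*(n:ℝ)/2), Nat.floor_le (by nlinarith), ?_⟩
    have := Nat.lt_floor_add_one ((1-ε)*(n:ℝ)/2); linarith
  have hxcast : ((n - x : ℕ):ℝ) = (n:ℝ) - x := by
    rw [Nat.cast_sub hxn]
  have halvx : alv n B x := by
    refine ⟨hxlt, ?_⟩
    have h1 : ((n - x : ℕ):ℝ) ≤ (B:ℝ) := by rw [hxcast]; linarith [hεn, hBgt, hxhalf]
    exact_mod_cast h1
  obtain ⟨T, hTle, hTge⟩ : ∃ T : ℕ, (T:ℝ) ≤ (8/ε) * n * Real.log n ∧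
      (8/ε) * n * Real.log n - 1 ≤ (T:ℝ) := by
    refine ⟨⌊(8/ε) * (n:ℝ) * Real.log n⌋₊, Nat.floor_le (by positivity), ?_⟩
    have := Nat.lt_floor_add_one ((8/ε) * (n:ℝ) * Real.log n); linarith
  have hδ0 : 0 ≤ 1 - ε/(2*(n:ℝ)) := by
    have h1 : ε/(2*(n:ℝ)) ≤ ε := by
      rw [div_le_iff₀ (by positivity)]
      nlinarith
    linarith
  -- bound on the drift potential at time T
  have hSbound : StS μ X n B T ≤ 3 / (n:ℝ)^3 := by
    have h1 := St_iter hM ε hε0 hn0 hBle hδ0 T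
    rw [StS_init hM hxlt halvx] at h1
    have h2 : (n:ℝ) - x ≤ n := by
      have : (0:ℝ) ≤ x := by positivity
      linarith
    have hpw : (0:ℝ) ≤ (1 - ε/(2*(n:ℝ)))^T := pow_nonneg hδ0 T
    have h3 : (1 - ε/(2*(n:ℝ)))^T ≤ Real.exp (-(ε/(2*(n:ℝ))))^T := by
      refine pow_le_pow_left₀ hδ0 ?_ T
      have := Real.add_one_le_exp (-(ε/(2*(n:ℝ))))
      linarith
    have h4 : Real.exp (-(ε/(2*(n:ℝ))))^T = Real.exp ((T:ℝ) * (-(ε/(2*(n:ℝ))))) := by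
      rw [Real.exp_nat_mul]
    have h5 : ε/(2*(n:ℝ)) * ((8/ε) * n * Real.log n) = 4 * Real.log n := by
      field_simp
      ring
    have h6 : (T:ℝ) * (-(ε/(2*(n:ℝ)))) ≤ 1 - 4 * Real.log n := by
      have hd : (0:ℝ) ≤ ε/(2*(n:ℝ)) := by positivity
      have h7 : ε/(2*(n:ℝ)) * ((8/ε) * n * Real.log n - 1) ≤ ε/(2*(n:ℝ)) * T :=
        mul_le_mul_of_nonneg_left hTge hd
      have h8 : ε/(2*(n:ℝ)) ≤ 1 := by linarith [hδ0]
      have h9 : ε/(2*(n:ℝ)) * ((8/ε) * n * Real.log n - 1)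
          = 4 * Real.log n - ε/(2*(n:ℝ)) := by
        rw [mul_sub, h5, mul_one]
      linarith [h7, h9, h8]
    have h9 : Real.exp ((T:ℝ) * (-(ε/(2*(n:ℝ))))) ≤ Real.exp 1 / (n:ℝ)^4 := by
      have h10 : Real.exp (4 * Real.log n) = (n:ℝ)^4 := by
        rw [show (4:ℝ) * Real.log n
            = Real.log n + Real.log n + Real.log n + Real.log n by ring,
          Real.exp_add, Real.exp_add, Real.exp_add, Real.exp_log hnR0]
        ring
      calc Real.exp ((T:ℝ) * (-(ε/(2*(n:ℝ))))) ≤ Real.exp (1 - 4 * Real.log n) :=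
            Real.exp_le_exp.mpr h6
        _ = Real.exp 1 / (n:ℝ)^4 := by rw [Real.exp_sub, h10]
    have hexp1 : Real.exp 1 ≤ 3 := by
      have := Real.exp_one_lt_d9
      linarith
    calc StS μ X n B T ≤ (1 - ε/(2*(n:ℝ)))^T * ((n:ℝ) - x) := h1
      _ ≤ (1 - ε/(2*(n:ℝ)))^T * n := mul_le_mul_of_nonneg_left h2 hpw
      _ ≤ (Real.exp 1 / (n:ℝ)^4) * n := by
          have h11 := le_trans (le_trans h3 (le_of_eq h4)) h9
          exact mul_le_mul_of_nonneg_right h11 (le_of_lt hnR0)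
      _ = Real.exp 1 / (n:ℝ)^3 := by field_simp
      _ ≤ 3 / (n:ℝ)^3 := by gcongr
  -- bound on the barrier-break mass
  set L := lamFun ε with hL
  have hL1ε : 1 + ε ≤ L := lamFun_ge ε hε0 hε
  have hL1 : 1 ≤ L := by linarith
  have hLpos : 0 < L := by linarith
  have hSig0 : 0 ≤ ∑ t ∈ Finset.range T, brS μ X n B t :=
    Finset.sum_nonneg fun t _ => brS_nonneg t
  have hbrSum : ∑ t ∈ Finset.range T, brS μ X n B t ≤ 4/(a*n)^2 := by
    have h1 := Lt_iter hM ε hε0 hε hn0 hBle T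
    rw [LtS_init hM ε hxlt halvx] at h1
    have h2 : 0 ≤ LtS μ X n B ε T := LtS_nonneg ε hε0 hε T
    have hnxB : n - x ≤ B := halvx.2
    set k := B + 1 - (n - x) with hk
    have hka : (n - x) + k = B + 1 := by omega
    have hpowsplit : L^(B+1) = L^(n-x) * L^k := by rw [← pow_add, hka]
    have h3 : L^(n-x) * (L^k * ∑ t ∈ Finset.range T, brS μ X n B t) ≤ L^(n-x) * 1 := by
      rw [← mul_assoc, ← hpowsplit, mul_one]
      linarith
    have h4 : L^k * ∑ t ∈ Finset.range T, brS μ X n B t ≤ 1 :=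
      le_of_mul_le_mul_left h3 (pow_pos hLpos _)
    have hkcast : (k:ℝ) = (B:ℝ) + 1 - ((n-x:ℕ):ℝ) := by
      have hc : ((B + 1 - (n - x) : ℕ):ℝ) = ((B+1:ℕ):ℝ) - ((n-x:ℕ):ℝ) := by
        rw [Nat.cast_sub (by omega)]
      rw [hk, hc]; push_cast; ring
    have hkge : ε*(n:ℝ)/2 ≤ (k:ℝ) := by
      rw [hkcast, hxcast]
      linarith [hBgt, hxhalf]
    have hLk : (a*n)^2/4 ≤ L^k := by
      have h5 : (1+ε)^k ≤ L^k := pow_le_pow_left₀ (by linarith) hL1ε k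
      have h6 : (1+ε)^k = Real.exp ((k:ℝ) * Real.log (1+ε)) := by
        rw [← Real.log_pow, Real.exp_log (pow_pos (by linarith) k)]
      have h7 : a*(n:ℝ) ≤ (k:ℝ) * Real.log (1+ε) := by
        rw [ha]
        calc ε/2 * Real.log (1+ε) * n = (ε*n/2) * Real.log (1+ε) := by ring
          _ ≤ (k:ℝ) * Real.log (1+ε) := mul_le_mul_of_nonneg_right hkge (le_of_lt hlg)
      have h8 : Real.exp (a*n) ≤ Real.exp ((k:ℝ)*Real.log (1+ε)) := Real.exp_le_exp.mpr h7
      have h9 := sq_div_four_le_exp (a*n) (by positivity)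
      calc (a*n)^2/4 ≤ Real.exp (a*n) := h9
        _ ≤ Real.exp ((k:ℝ)*Real.log (1+ε)) := h8
        _ = (1+ε)^k := h6.symm
        _ ≤ L^k := h5
    have hQ : (0:ℝ) < (a*n)^2/4 := by positivity
    have h10 : ((a*n)^2/4) * (∑ t ∈ Finset.range T, brS μ X n B t) ≤ 1 :=
      le_trans (mul_le_mul_of_nonneg_right hLk hSig0) h4
    have h11 : ∑ t ∈ Finset.range T, brS μ X n B t ≤ 1 / ((a*n)^2/4) := by
      rw [le_div_iff₀ hQ]
      linarith [h10]
    have h12 : 1 / ((a*(n:ℝ))^2/4) = 4/(a*n)^2 := by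
      field_simp
    rw [h12] at h11
    exact h11
  -- total numeric bound
  have htot : StS μ X n B T + ∑ t ∈ Finset.range T, brS μ X n B t ≤ (n:ℝ)⁻¹ := by
    have h1 : 3/(n:ℝ)^3 ≤ 1/(2*n) := by
      rw [div_le_div_iff₀ (by positivity) (by positivity)]
      nlinarith [mul_nonneg (mul_nonneg (sub_nonneg.2 hnR) hnR0.le) hnR0.le,
        mul_nonneg (sub_nonneg.2 hnR) hnR0.le]
    have h2 : 4/(a*(n:ℝ))^2 ≤ 1/(2*n) := by
      rw [div_le_div_iff₀ (by positivity) (by positivity)]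
      have h3 : (8:ℝ) ≤ a^2 * n := by
        have h5 := (div_le_iff₀ (by positivity : (0:ℝ) < a^2)).mp hna
        linarith
      nlinarith [mul_nonneg (sub_nonneg.2 h3) hnR0.le]
    have h4 : 1/(2*(n:ℝ)) + 1/(2*n) = (n:ℝ)⁻¹ := by
      rw [inv_eq_one_div, div_add_div _ _ (by positivity) (by positivity),
        div_eq_div_iff (by positivity) (by positivity)]
      ring
    linarith [hSbound, hbrSum]
  -- measure accounting
  have hX := hM.2.1
  set Good : Set Ω := {ω | ∃ t ≤ T, X t ω = n ∧ ∀ i < t, alv n B (X i ω)} with hGoodDef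
  have hGoodsub : Good ⊆ {ω | ∃ t : ℕ, (t:ℝ) ≤ 8/ε * n * Real.log n ∧ X t ω = n ∧
      ∀ t' ≤ t, (n:ℝ) - (X t' ω : ℝ) ≤ (1 - ε) * n / 2} := by
    rintro ω ⟨t, htT, hXn, hal⟩
    refine ⟨t, ?_, hXn, fun t' ht' => ?_⟩
    · have : (t:ℝ) ≤ T := by exact_mod_cast htT
      linarith
    · rcases eq_or_lt_of_le ht' with h | h
      · rw [h, hXn]
        simp only [sub_self]
        nlinarith
      · obtain ⟨hlt, hle⟩ := hal t' h
        have hc1 : ((n - X t' ω : ℕ):ℝ) = (n:ℝ) - X t' ω := Nat.cast_sub (le_of_lt hlt)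
        have hc2 : ((n - X t' ω : ℕ):ℝ) ≤ B := by exact_mod_cast hle
        linarith
  have hExc : μ {ω | ∃ i ≤ T, n < X i ω} = 0 := by
    have h1 := stay_le_n hM hxn T
    have hcompl : {ω | ∃ i ≤ T, n < X i ω} = {ω | ∀ i ≤ T, X i ω ≤ n}ᶜ := by
      ext ω
      simp only [Set.mem_compl_iff, Set.mem_setOf_eq, not_forall, not_le]
      constructor
      · rintro ⟨i, hi, h⟩; exact ⟨i, hi, h⟩
      · rintro ⟨i, hi, h⟩; exact ⟨i, hi, h⟩
    rw [hcompl, measure_compl (meas_past hX T (fun _ y => y ≤ n)) (measure_ne_top μ _),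
      measure_univ, h1, tsub_self]
  have hBrkU : μ (⋃ t ∈ Finset.range (T+1), BrkEv X n B t)
      ≤ ENNReal.ofReal (∑ t ∈ Finset.range T, brS μ X n B t) := by
    refine le_trans (measure_biUnion_finset_le _ _) ?_
    rw [Finset.sum_range_succ', BrkEv_zero_null hM halvx, add_zero]
    calc ∑ t ∈ Finset.range T, μ (BrkEv X n B (t+1))
        ≤ ∑ t ∈ Finset.range T, ENNReal.ofReal (brS μ X n B t) := by
          refine Finset.sum_le_sum fun t _ => ?_
          rw [BrkEv_succ]
          exact brk_event_le hM t
      _ = ENNReal.ofReal (∑ t ∈ Finset.range T, brS μ X n B t) :=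
          (ENNReal.ofReal_sum_of_nonneg (fun t _ => brS_nonneg t)).symm
  have hAlv : μ (AlvSet X n B T) ≤ ENNReal.ofReal (StS μ X n B T) := alive_T_le hM hn0 T
  have hstep : μ (AlvSet X n B T) + μ (⋃ t ∈ Finset.range (T+1), BrkEv X n B t)
      + μ {ω | ∃ i ≤ T, n < X i ω} ≤ ENNReal.ofReal ((n:ℝ)⁻¹) := by
    rw [hExc, add_zero]
    calc μ (AlvSet X n B T) + μ (⋃ t ∈ Finset.range (T+1), BrkEv X n B t)
        ≤ ENNReal.ofReal (StS μ X n B T)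
          + ENNReal.ofReal (∑ t ∈ Finset.range T, brS μ X n B t) := add_le_add hAlv hBrkU
      _ = ENNReal.ofReal (StS μ X n B T + ∑ t ∈ Finset.range T, brS μ X n B t) :=
          (ENNReal.ofReal_add (StS_nonneg T) hSig0).symm
      _ ≤ ENNReal.ofReal ((n:ℝ)⁻¹) := ENNReal.ofReal_le_ofReal htot
  have hone : (1:ℝ≥0∞) ≤ μ Good + ENNReal.ofReal ((n:ℝ)⁻¹) := by
    have hcov := univ_cover (X := X) (n := n) (B := B) T
    calc (1:ℝ≥0∞) = μ Set.univ := measure_univ.symm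
      _ ≤ μ ((Good ∪ AlvSet X n B T ∪ (⋃ t ∈ Finset.range (T+1), BrkEv X n B t))
            ∪ {ω | ∃ i ≤ T, n < X i ω}) := measure_mono hcov
      _ ≤ μ (Good ∪ AlvSet X n B T ∪ (⋃ t ∈ Finset.range (T+1), BrkEv X n B t))
            + μ {ω | ∃ i ≤ T, n < X i ω} := measure_union_le _ _
      _ ≤ (μ (Good ∪ AlvSet X n B T) + μ (⋃ t ∈ Finset.range (T+1), BrkEv X n B t))
            + μ {ω | ∃ i ≤ T, n < X i ω} :=
          add_le_add (measure_union_le _ _) le_rfl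
      _ ≤ ((μ Good + μ (AlvSet X n B T)) + μ (⋃ t ∈ Finset.range (T+1), BrkEv X n B t))
            + μ {ω | ∃ i ≤ T, n < X i ω} :=
          add_le_add (add_le_add (measure_union_le _ _) le_rfl) le_rfl
      _ = μ Good + (μ (AlvSet X n B T) + μ (⋃ t ∈ Finset.range (T+1), BrkEv X n B t)
            + μ {ω | ∃ i ≤ T, n < X i ω}) := by ring
      _ ≤ μ Good + ENNReal.ofReal ((n:ℝ)⁻¹) := add_le_add le_rfl hstep
  have hglue : ENNReal.ofReal (1 - (n:ℝ)⁻¹) + ENNReal.ofReal ((n:ℝ)⁻¹)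
      ≤ μ Good + ENNReal.ofReal ((n:ℝ)⁻¹) := by
    rw [← ENNReal.ofReal_add hinvn (by positivity)]
    have h1 : (1 - (n:ℝ)⁻¹) + (n:ℝ)⁻¹ = 1 := by ring
    rw [h1, ENNReal.ofReal_one]
    exact hone
  have hmain : ENNReal.ofReal (1 - (n:ℝ)⁻¹) ≤ μ Good :=
    (ENNReal.add_le_add_iff_right ENNReal.ofReal_ne_top).mp hglue
  exact le_trans hmain (measure_mono hGoodsub)
end
end

section
/- Let n ≥ 1, j ≥ 1, and let s be an integer with 1 ≤ s ≤ n. Write G(α) = P(Bin(2j, α) ≤ j−1) + (1/2)·P(Bin(2j, α) = j). Then s·G(s/n) ≤ n·G((s−1)/n) + (s−1)·(1 − G((s−1)/n)). -/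
open MeasureTheory Finset
open scoped ENNReal NNReal

noncomputable section

/-- minority-adoption probability for stmt19 -/
def minProb (j : ℕ) (α : ℝ) : ℝ :=
  binomCDF (2 * j) (j - 1) α + (1 / 2) * binomPMF (2 * j) j α


lemma hasDerivAt_binomPMF (m k : ℕ) (p : ℝ) :
    HasDerivAt (binomPMF m k)
      ((m.choose k : ℝ) * ((k * p ^ (k - 1)) * (1 - p) ^ (m - k)
        - p ^ k * (((m - k : ℕ) : ℝ) * (1 - p) ^ (m - k - 1)))) p := by
  have h1 : HasDerivAt (fun p : ℝ => 1 - p) (-1) p := by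
    simpa using ((hasDerivAt_id p).const_sub 1)
  have h2 : HasDerivAt (fun p : ℝ => (1 - p) ^ (m - k))
      ((((m - k : ℕ) : ℝ)) * (1 - p) ^ (m - k - 1) * (-1)) p := h1.pow (m - k)
  have h3 : HasDerivAt (fun p : ℝ => (m.choose k : ℝ) * p ^ k)
      ((m.choose k : ℝ) * (k * p ^ (k - 1))) p :=
    (hasDerivAt_pow k p).const_mul _
  have := h3.fun_mul h2
  refine this.congr_deriv (Eq.symm ?_)
  ring

lemma hasDerivAt_minProb (j : ℕ) (hj : 1 ≤ j) (p : ℝ) :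
    HasDerivAt (minProb j)
      (-((j : ℝ) * ((2 * j).choose j : ℝ) * p ^ (j - 1) * (1 - p) ^ (j - 1)) / 2) p := by
  set m := 2 * j with hm
  set f : ℕ → ℝ := fun k => (k : ℝ) * (m.choose k : ℝ) * p ^ (k - 1) * (1 - p) ^ (m - k)
    with hf
  have hsum : HasDerivAt (fun q => binomCDF m (j - 1) q)
      (∑ k ∈ Finset.range j, (f k - f (k + 1))) p := by
    have hrange : j - 1 + 1 = j := Nat.sub_add_cancel hj
    have := HasDerivAt.fun_sum (u := Finset.range j)
      (A := fun k q => binomPMF m k q) (A' := fun k => f k - f (k + 1)) (x := p) ?_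
    · unfold binomCDF; rw [hrange]; exact this
    · intro k hk
      have hkm : k < m := by
        have := Finset.mem_range.mp hk; omega
      have hid : m.choose k * (m - k) = (m.choose (k+1)) * (k+1) :=
        (Nat.choose_succ_right_eq m k).symm
      have hidR : ((m.choose k : ℝ)) * ((m - k : ℕ) : ℝ)
          = ((m.choose (k+1) : ℝ)) * ((k : ℝ) + 1) := by exact_mod_cast hid
      have := hasDerivAt_binomPMF m k p
      refine this.congr_deriv (Eq.symm ?_)
      simp only [hf]
      have h1 : m - (k + 1) = m - k - 1 := by omega
      have h2 : (k + 1) - 1 = k := by omega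
      rw [h1, h2]
      push_cast
      linear_combination (p ^ k * (1 - p) ^ (m - k - 1)) * hidR
  have htel : (∑ k ∈ Finset.range j, (f k - f (k + 1))) = f 0 - f j :=
    Finset.sum_range_sub' f j
  have hf0 : f 0 = 0 := by simp [hf]
  have hpmf := (hasDerivAt_binomPMF m j p).const_mul ((1:ℝ)/2)
  have hG := (hsum.fun_add hpmf)
  have : minProb j = fun q => binomCDF m (j - 1) q + (1/2) * binomPMF m j q := rfl
  rw [this]
  refine hG.congr_deriv (Eq.symm ?_)
  rw [htel, hf0]
  simp only [hf]
  have hmj : m - j = j := by omega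
  rw [hmj]
  have hps : p ^ j = p ^ (j - 1) * p := by
    conv_lhs => rw [show j = (j - 1) + 1 by omega]
    rw [pow_succ]
  have hqs : (1 - p) ^ j = (1 - p) ^ (j - 1) * (1 - p) := by
    conv_lhs => rw [show j = (j - 1) + 1 by omega]
    rw [pow_succ]
  rw [hps, hqs]
  ring

lemma antitoneOn_minProb (j : ℕ) (hj : 1 ≤ j) : AntitoneOn (minProb j) (Set.Icc 0 1) := by
  have hcont : ContinuousOn (minProb j) (Set.Icc 0 1) :=
    fun x _ => ((hasDerivAt_minProb j hj x).continuousAt).continuousWithinAt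
  apply antitoneOn_of_deriv_nonpos (convex_Icc 0 1) hcont
  · intro x hx
    exact ((hasDerivAt_minProb j hj x).differentiableAt).differentiableWithinAt
  · intro x hx
    rw [interior_Icc] at hx
    rw [(hasDerivAt_minProb j hj x).deriv]
    have h1 : (0:ℝ) ≤ x ^ (j - 1) := pow_nonneg (le_of_lt hx.1) _
    have h2 : (0:ℝ) ≤ (1 - x) ^ (j - 1) := pow_nonneg (by linarith [hx.2]) _
    have h3 : (0:ℝ) ≤ (j : ℝ) * ((2 * j).choose j : ℝ) := by positivity
    have := mul_nonneg (mul_nonneg h3 h1) h2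
    linarith

lemma minProb_nonneg (j : ℕ) (p : ℝ) (h0 : 0 ≤ p) (h1 : p ≤ 1) : 0 ≤ minProb j p := by
  unfold minProb binomCDF binomPMF
  have : (0:ℝ) ≤ 1 - p := by linarith
  apply add_nonneg
  · exact Finset.sum_nonneg fun k _ => by positivity
  · positivity

lemma minProb_zero (j : ℕ) (hj : 1 ≤ j) : minProb j 0 = 1 := by
  unfold minProb binomCDF binomPMF
  rw [Finset.sum_eq_single 0]
  · norm_num [zero_pow (show j ≠ 0 by omega)]
  · intro k _ hk
    simp [zero_pow hk]
  · intro h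
    exact absurd (Finset.mem_range.mpr (by omega)) h

theorem stmt19 (n j s : ℕ) (hn : 1 ≤ n) (hj : 1 ≤ j) (hs1 : 1 ≤ s) (hsn : s ≤ n) :
    (s : ℝ) * minProb j ((s : ℝ) / n) ≤
      (n : ℝ) * minProb j (((s : ℝ) - 1) / n)
        + ((s : ℝ) - 1) * (1 - minProb j (((s : ℝ) - 1) / n)) := by
  have hnpos : (0:ℝ) < n := by exact_mod_cast hn
  have hs1' : (1:ℝ) ≤ s := by exact_mod_cast hs1
  have hsn' : (s:ℝ) ≤ n := by exact_mod_cast hsn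
  set α := (s : ℝ) / n
  set β := ((s : ℝ) - 1) / n
  have hα : α ∈ Set.Icc (0:ℝ) 1 := ⟨by positivity, by rw [div_le_one hnpos]; linarith⟩
  have hβ0 : (0:ℝ) ≤ β := by
    apply div_nonneg (by linarith) (le_of_lt hnpos)
  have hβ : β ∈ Set.Icc (0:ℝ) 1 := ⟨hβ0, by rw [div_le_one hnpos]; linarith⟩
  have hβα : β ≤ α := by
    show ((s:ℝ) - 1) / n ≤ (s:ℝ) / n
    gcongr
    linarith
  have h1 := antitoneOn_minProb j hj hβ hα hβα
  have h2 : minProb j β ≤ 1 := by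
    have := antitoneOn_minProb j hj ⟨le_refl 0, zero_le_one⟩ hβ hβ0
    rwa [minProb_zero j hj] at this
  have h3 := minProb_nonneg j α hα.1 hα.2
  have h4 := minProb_nonneg j β hβ.1 hβ.2
  nlinarith [mul_le_mul_of_nonneg_left h1 (by linarith : (0:ℝ) ≤ (s:ℝ)),
    mul_nonneg (by linarith : (0:ℝ) ≤ (n:ℝ) - s) h4,
    mul_nonneg (by linarith : (0:ℝ) ≤ (s:ℝ) - 1) (by linarith : (0:ℝ) ≤ 1 - minProb j β)]
end
end
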